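/- arXiv:2411.09778 — 8 statements merged into one kernel-verified Lean document; each statement's English description precedes it below -/
import Mathlib

section
/- Suppose R₀ > 1 and θ is a positive bounded linear functional on M^b(Ω) with θ(Kg) = R₀·θ(g) for all g. If w̃ ∈ M^b₊(Ω) satisfies w̃ = F(w̃) and θ(w̃) > 0, then ‖w̃‖_∞ ≥ ln R₀. -/
open MeasureTheory

/-- If R₀ > 1 and θ is a positive bounded linear eigenfunctional of the next generation
operator K (Kg(x) = ∫ g dκ(·,x)) with eigenvalue R₀, then any fixed point w̃ = F(w̃) in
M^b₊(Ω) with θ(w̃) > 0 satisfies ‖w̃‖_∞ ≥ ln R₀. -/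
theorem stmt5 {Ω : Type*} [MeasurableSpace Ω] [Nonempty Ω]
    (κ : Ω → Measure Ω) [∀ x, IsFiniteMeasure (κ x)]
    (R0 : ℝ) (hR0 : 1 < R0)
    (θ : (Ω → ℝ) →ₗ[ℝ] ℝ)
    (hpos : ∀ g h : Ω → ℝ, Measurable g → Measurable h →
      (∃ C, ∀ x, |g x| ≤ C) → (∃ C, ∀ x, |h x| ≤ C) →
      (∀ x, g x ≤ h x) → θ g ≤ θ h)
    (hbound : ∃ Cθ : ℝ, ∀ g : Ω → ℝ, ∀ C : ℝ, (∀ x, |g x| ≤ C) → |θ g| ≤ Cθ * C)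
    (heig : ∀ g : Ω → ℝ, Measurable g → (∃ C, ∀ x, |g x| ≤ C) →
      θ (fun x => ∫ ξ, g ξ ∂ κ x) = R0 * θ g)
    (w : Ω → ℝ) (hwm : Measurable w) (hwnn : ∀ x, 0 ≤ w x)
    (hwb : ∃ C, ∀ x, w x ≤ C)
    (hfix : ∀ x, w x = ∫ ξ, (1 - Real.exp (-(w ξ))) ∂ κ x)
    (hθ : 0 < θ w) :
    Real.log R0 ≤ ⨆ x, w x := by
  obtain ⟨C, hC⟩ := hwb
  set M : ℝ := ⨆ x, w x with hMdef
  have hbdd : BddAbove (Set.range w) := ⟨C, by rintro _ ⟨x, rfl⟩; exact hC x⟩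
  have hM : ∀ x, w x ≤ M := fun x => le_ciSup hbdd x
  obtain ⟨x0⟩ := ‹Nonempty Ω›
  have hM0 : 0 ≤ M := le_trans (hwnn x0) (hM x0)
  have hC0 : 0 ≤ C := le_trans (hwnn x0) (hC x0)
  -- pointwise inequality: exp(-M) * w ξ ≤ 1 - exp(-(w ξ))
  have hpt : ∀ ξ, Real.exp (-M) * w ξ ≤ 1 - Real.exp (-(w ξ)) := by
    intro ξ
    have hy := hwnn ξ
    have hyM := hM ξ
    have h1 : Real.exp (-M) ≤ Real.exp (-(w ξ)) := Real.exp_le_exp.2 (by linarith)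
    have h2 : (1 + w ξ) * Real.exp (-(w ξ)) ≤ 1 := by
      have := Real.add_one_le_exp (w ξ)
      have hpe := Real.exp_pos (-(w ξ))
      have : (1 + w ξ) * Real.exp (-(w ξ)) ≤ Real.exp (w ξ) * Real.exp (-(w ξ)) := by
        apply mul_le_mul_of_nonneg_right (by linarith) (le_of_lt hpe)
      rwa [← Real.exp_add, add_neg_cancel, Real.exp_zero] at this
    nlinarith [mul_le_mul_of_nonneg_left h1 hy]
  -- measurability and bounds
  have hmg : Measurable (fun ξ => Real.exp (-M) * w ξ) := hwm.const_mul _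
  have hmh : Measurable (fun ξ => 1 - Real.exp (-(w ξ))) :=
    measurable_const.sub (Real.measurable_exp.comp hwm.neg)
  have hbg : ∃ C', ∀ x, |Real.exp (-M) * w x| ≤ C' := by
    refine ⟨C, fun x => ?_⟩
    have h1 : Real.exp (-M) ≤ 1 := Real.exp_le_one_iff.2 (by linarith)
    rw [abs_of_nonneg (mul_nonneg (Real.exp_pos _).le (hwnn x))]
    calc Real.exp (-M) * w x ≤ 1 * w x :=
          mul_le_mul_of_nonneg_right h1 (hwnn x)
      _ = w x := one_mul _
      _ ≤ C := hC x
  have hbh : ∃ C', ∀ x, |1 - Real.exp (-(w x))| ≤ C' := by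
    refine ⟨1, fun x => ?_⟩
    have h1 : Real.exp (-(w x)) ≤ 1 := Real.exp_le_one_iff.2 (by linarith [hwnn x])
    have h2 := (Real.exp_pos (-(w x))).le
    rw [abs_of_nonneg (by linarith)]; linarith
  -- θ monotone step
  have hmono : θ (fun ξ => Real.exp (-M) * w ξ) ≤ θ (fun ξ => 1 - Real.exp (-(w ξ))) :=
    hpos _ _ hmg hmh hbg hbh hpt
  have hsmul : θ (fun ξ => Real.exp (-M) * w ξ) = Real.exp (-M) * θ w := by
    have : (fun ξ => Real.exp (-M) * w ξ) = Real.exp (-M) • w := rfl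
    rw [this, θ.map_smul, smul_eq_mul]
  -- eigenvalue step applied to f ∘ w
  have heq : θ w = R0 * θ (fun ξ => 1 - Real.exp (-(w ξ))) := by
    have h := heig (fun ξ => 1 - Real.exp (-(w ξ))) hmh hbh
    have hfun : (fun x => ∫ ξ, (1 - Real.exp (-(w ξ))) ∂ κ x) = w := by
      funext x; exact (hfix x).symm
    rwa [hfun] at h
  -- combine
  have hR0pos : (0:ℝ) < R0 := by linarith
  have hkey : Real.exp (-M) * θ w ≤ θ w / R0 := by
    rw [← hsmul]
    calc θ (fun ξ => Real.exp (-M) * w ξ) ≤ θ (fun ξ => 1 - Real.exp (-(w ξ))) := hmono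
      _ = θ w / R0 := by rw [heq]; field_simp
  have hexp : R0 ≤ Real.exp M := by
    have h1 : Real.exp (-M) ≤ 1 / R0 := by
      have hkey' : Real.exp (-M) * θ w ≤ (1 / R0) * θ w := by
        rw [div_mul_eq_mul_div, one_mul]; exact hkey
      exact le_of_mul_le_mul_right hkey' hθ
    have h2 : Real.exp (-M) = 1 / Real.exp M := by
      rw [Real.exp_neg]; ring
    rw [h2] at h1
    have hem := Real.exp_pos M
    rw [div_le_div_iff₀ hem hR0pos] at h1
    linarith
  exact (Real.log_le_iff_le_exp hR0pos).2 hexp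
end

section
/- Let κ be a measure kernel dominated by a finite measure ν (κ(ω,x) ≤ ν(ω) for all ω, x). Let w be the minimal solution of w = F(w) + w⁰ and (wₙ) the associated monotone recursion wₙ = F(wₙ₋₁) + w⁰, w₀ = w⁰. Then ‖w − wₙ‖_∞ → 0 as n → ∞. -/
open Filter MeasureTheory

/-- For a measure kernel dominated by a finite measure ν, the monotone recursion
wₙ = F(wₙ₋₁) + w⁰ converges to the minimal solution w of w = F(w) + w⁰ uniformly
on Ω: ‖w − wₙ‖_∞ → 0. -/
theorem stmt7 {Ω : Type*} [MeasurableSpace Ω]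
    (κ : Ω → Measure Ω) [∀ x, IsFiniteMeasure (κ x)]
    (ν : Measure Ω) [IsFiniteMeasure ν]
    (hdom : ∀ s : Set Ω, MeasurableSet s → ∀ x, κ x s ≤ ν s)
    (w0 : Ω → ℝ) (hw0m : Measurable w0) (hw0nn : ∀ x, 0 ≤ w0 x)
    (hw0b : ∃ C, ∀ x, w0 x ≤ C)
    (seq : ℕ → Ω → ℝ) (h0 : seq 0 = w0)
    (hS : ∀ n x, seq (n+1) x = (∫ ξ, (1 - Real.exp (-(seq n ξ))) ∂ κ x) + w0 x)
    (hmeas : ∀ n, Measurable (seq n))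
    (hmono : ∀ n x, seq n x ≤ seq (n+1) x)
    (w : Ω → ℝ)
    (hlim : ∀ x, Tendsto (fun n => seq n x) atTop (nhds (w x))) :
    ∀ ε : ℝ, 0 < ε → ∃ N : ℕ, ∀ n ≥ N, ∀ x, |w x - seq n x| < ε := by
  intro ε hε
  -- basic facts
  have hmo : ∀ x, Monotone fun n => seq n x :=
    fun x => monotone_nat_of_le_succ (fun n => hmono n x)
  have hseqle : ∀ n x, seq n x ≤ w x := by
    intro n x
    exact (hmo x).ge_of_tendsto (hlim x) n
  have hwmeas : Measurable w := by
    apply measurable_of_tendsto_metrizable hmeas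
    exact tendsto_pi_nhds.mpr hlim
  set g : ℕ → Ω → ℝ := fun n x => 1 - Real.exp (-(seq n x)) with hg
  set gw : Ω → ℝ := fun x => 1 - Real.exp (-(w x)) with hgw
  have hf_le : ∀ {a b : ℝ}, a ≤ b → 1 - Real.exp (-a) ≤ 1 - Real.exp (-b) := by
    intro a b h
    exact sub_le_sub_left (Real.exp_le_exp.mpr (neg_le_neg h)) 1
  have hgm : ∀ n, Measurable (g n) :=
    fun n => measurable_const.sub ((hmeas n).neg.exp)
  have hgwm : Measurable gw := measurable_const.sub (hwmeas.neg.exp)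
  have hgbd : ∀ n x, |g n x| ≤ 1 := by
    intro n x
    have hnn : 0 ≤ seq n x := by
      have h0' : w0 x ≤ seq n x := by
        have := (hmo x) (Nat.zero_le n); simpa [h0] using this
      linarith [hw0nn x]
    have h1 : Real.exp (-(seq n x)) ≤ 1 := by
      have := Real.exp_le_exp.mpr (by linarith : -(seq n x) ≤ 0)
      simpa using this
    have h2 := Real.exp_pos (-(seq n x))
    rw [abs_le]; constructor <;> [simp only [g]; simp only [g]] <;> linarith
  have hgwbd : ∀ x, |gw x| ≤ 1 := by
    intro x
    have hnn : 0 ≤ w x := le_trans (by simpa [h0] using hw0nn x) (hseqle 0 x)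
    have h1 : Real.exp (-(w x)) ≤ 1 := by
      have := Real.exp_le_exp.mpr (by linarith : -(w x) ≤ 0)
      simpa using this
    have h2 := Real.exp_pos (-(w x))
    rw [abs_le]; constructor <;> [simp only [gw]; simp only [gw]] <;> linarith
  -- integrability
  have hInt : ∀ (μ : Measure Ω) [IsFiniteMeasure μ], ∀ n, Integrable (g n) μ := by
    intro μ _ n
    exact (integrable_const (1:ℝ)).mono' (hgm n).aestronglyMeasurable
      (Filter.Eventually.of_forall fun x => by simpa using hgbd n x)
  have hIntw : Integrable gw ν :=
    (integrable_const (1:ℝ)).mono' hgwm.aestronglyMeasurable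
      (Filter.Eventually.of_forall fun x => by simpa using hgwbd x)
  -- the error sequence
  set a : ℕ → ℝ := fun n => ∫ x, (gw x - g n x) ∂ν with ha
  have hgle : ∀ n x, g n x ≤ gw x := fun n x => hf_le (hseqle n x)
  have hglemn : ∀ {m n : ℕ}, n ≤ m → ∀ x, g n x ≤ g m x :=
    fun h x => hf_le ((hmo x) h)
  -- a n → 0
  have htendint : Tendsto (fun n => ∫ x, g n x ∂ν) atTop (nhds (∫ x, gw x ∂ν)) := by
    apply tendsto_integral_of_dominated_convergence (fun _ => (1:ℝ))
      (fun n => (hgm n).aestronglyMeasurable) (integrable_const 1)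
      (fun n => Filter.Eventually.of_forall fun x => by simpa using hgbd n x)
    refine Filter.Eventually.of_forall fun x => ?_
    exact tendsto_const_nhds.sub ((Real.continuous_exp.tendsto _).comp ((hlim x).neg))
  have ha0 : Tendsto a atTop (nhds 0) := by
    have heq : a = fun n => (∫ x, gw x ∂ν) - ∫ x, g n x ∂ν :=
      funext fun n => integral_sub hIntw (hInt ν n)
    rw [heq]
    have h : Tendsto (fun n => (∫ x, gw x ∂ν) - ∫ x, g n x ∂ν) atTop
        (nhds ((∫ x, gw x ∂ν) - ∫ x, gw x ∂ν)) := tendsto_const_nhds.sub htendint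
    simpa using h
  have haanti : Antitone a := by
    intro m n hmn
    apply integral_mono (hIntw.sub (hInt ν n)) (hIntw.sub (hInt ν m))
    intro x
    exact sub_le_sub_left (hglemn hmn x) _
  -- key bound: w x - seq (n+1) x ≤ a n
  have hkey : ∀ n x, w x - seq (n+1) x ≤ a n := by
    intro n x
    have hlim' : Tendsto (fun m => seq (m+1) x - seq (n+1) x) atTop
        (nhds (w x - seq (n+1) x)) :=
      (((hlim x).comp (tendsto_add_atTop_nat 1)).sub tendsto_const_nhds)
    refine le_of_tendsto hlim' ?_
    filter_upwards [eventually_ge_atTop n] with m hm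
    have hle : κ x ≤ ν := (Measure.le_iff).mpr (fun s hs => hdom s hs x)
    have e1 : seq (m+1) x - seq (n+1) x = ∫ ξ, (g m ξ - g n ξ) ∂ κ x := by
      rw [hS m x, hS n x, integral_sub (hInt (κ x) m) (hInt (κ x) n)]
      ring
    rw [e1]
    have e2 : (∫ ξ, (g m ξ - g n ξ) ∂ κ x) ≤ ∫ ξ, (g m ξ - g n ξ) ∂ ν := by
      apply integral_mono_measure hle
      · exact Filter.Eventually.of_forall fun ξ => sub_nonneg.mpr (hglemn hm ξ)
      · exact (hInt ν m).sub (hInt ν n)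
    refine e2.trans ?_
    apply integral_mono ((hInt ν m).sub (hInt ν n)) (hIntw.sub (hInt ν n))
    intro ξ
    exact sub_le_sub_right (hgle m ξ) _
  -- conclude
  obtain ⟨N, hN⟩ := (Metric.tendsto_atTop.mp ha0) ε hε
  refine ⟨N + 1, fun n hn x => ?_⟩
  have hnn : 0 ≤ w x - seq n x := sub_nonneg.mpr (hseqle n x)
  rw [abs_of_nonneg hnn]
  obtain ⟨m, rfl⟩ : ∃ m, n = N + 1 + m := ⟨n - (N+1), by omega⟩
  have hidx : N + 1 + m = (N + m) + 1 := by omega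
  have h1 : w x - seq (N + 1 + m) x ≤ a (N + m) := by
    rw [hidx]; exact hkey (N + m) x
  have h2 : a (N + m) ≤ a N := haanti (Nat.le_add_right N m)
  have h3 : a N < ε := by
    have := hN N le_rfl
    rw [Real.dist_eq, sub_zero] at this
    exact (le_abs_self _).trans_lt this
  linarith
end

section
/- Let κ be semi-separable: δ·ν(ω)·k₀(x) ≤ κ(ω,x) ≤ ν(ω)·k₀(x) for some δ ∈ (0,1], nonzero k₀ ∈ M^b₊(Ω), nonzero finite measure ν. Then the spectral radius R₀ of the induced operator K satisfies δ·∫_Ω k₀ dν ≤ R₀ ≤ ∫_Ω k₀ dν; in particular R₀ > 0 if and only if ∫_Ω k₀ dν > 0. -/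
/-!
The kernel bounds give `K k₀ ≥ δ (∫ k₀ dν) k₀` pointwise and, inductively,
`|Kⁿ⁺¹ g| ≤ ‖g‖ ν(Ω) (∫ k₀ dν)ⁿ k₀`. The second estimate bounds `‖Kⁿ⁺¹‖` by a constant times
`(∫ k₀ dν)ⁿ`, and every spectral value `λ` satisfies `|λ|ⁿ⁺¹ ≤ ‖Kⁿ⁺¹‖`, whence `R₀ ≤ ∫ k₀ dν`.
For the lower bound, if `R₀ < c := δ ∫ k₀ dν` then every `μ ≥ c` lies in the resolvent set and the
resolvent `(μ - K)⁻¹` is a positive operator: it is a Neumann series for `μ > ‖K‖`, and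
positivity propagates down to `c`. But then `-k₀ = (c - K)⁻¹ (K k₀ - c k₀) ≥ 0`, forcing `k₀ = 0`.
-/

open Set Filter MeasureTheory
open scoped ENNReal lp

theorem le_of_forall_pow_succ_le_mul_pow {x r M : ℝ} (hr : 0 ≤ r)
    (h : ∀ n : ℕ, x ^ (n + 1) ≤ M * r ^ n) : x ≤ r := by
  by_contra! hrx
  have hx0 : 0 < x := hr.trans_lt hrx
  rcases hr.eq_or_lt with rfl | hr
  · have := h 1
    simp only [pow_one, mul_zero] at this
    linarith [pow_pos hx0 (1 + 1)]
  obtain ⟨n, hn⟩ := pow_unbounded_of_one_lt (M / x) ((one_lt_div hr).2 hrx)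
  rw [div_lt_iff₀ hx0, div_pow, div_mul_eq_mul_div, lt_div_iff₀ (by positivity), ← pow_succ] at hn
  linarith [h n]

namespace spectrum

theorem spectralRadius_le_of_norm_pow_succ_le {𝕜 A : Type*} [NormedField 𝕜] [NormedRing A]
    [NormedAlgebra 𝕜 A] [CompleteSpace A] {a : A} {M r : ℝ} (hr : 0 ≤ r)
    (h : ∀ n : ℕ, ‖a ^ (n + 1)‖ ≤ M * r ^ n) : spectralRadius 𝕜 a ≤ ENNReal.ofReal r := by
  refine iSup₂_le fun k hk => ?_
  rw [← enorm_eq_nnnorm, ← ofReal_norm]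
  refine ENNReal.ofReal_le_ofReal <|
    le_of_forall_pow_succ_le_mul_pow (M := M * ‖(1 : A)‖) hr fun n => ?_
  calc ‖k‖ ^ (n + 1) = ‖k ^ (n + 1)‖ := (norm_pow _ _).symm
    _ ≤ ‖a ^ (n + 1)‖ * ‖(1 : A)‖ :=
      norm_le_norm_mul_of_mem (pow_image_subset a (n + 1) ⟨k, hk, rfl⟩)
    _ ≤ M * r ^ n * ‖(1 : A)‖ := mul_le_mul_of_nonneg_right (h n) (norm_nonneg _)
    _ = M * ‖(1 : A)‖ * r ^ n := by ring

end spectrum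

namespace MeasureTheory

variable {Ω : Type*} [MeasurableSpace Ω] {μ ν : Measure Ω} {c : ℝ}

theorem Measure.le_ofReal_smul_of_toReal_le [IsFiniteMeasure μ] [IsFiniteMeasure ν] (hc : 0 ≤ c)
    (h : ∀ s, MeasurableSet s → (μ s).toReal ≤ c * (ν s).toReal) : μ ≤ ENNReal.ofReal c • ν :=
  Measure.le_iff.2 fun s hs => by
    rw [Measure.smul_apply, smul_eq_mul, ← ENNReal.ofReal_toReal (measure_ne_top μ s),
      ← ENNReal.ofReal_toReal (measure_ne_top ν s), ← ENNReal.ofReal_mul hc]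
    exact ENNReal.ofReal_le_ofReal (h s hs)

theorem Measure.ofReal_smul_le_of_le_toReal [IsFiniteMeasure μ] [IsFiniteMeasure ν] (hc : 0 ≤ c)
    (h : ∀ s, MeasurableSet s → c * (ν s).toReal ≤ (μ s).toReal) : ENNReal.ofReal c • ν ≤ μ :=
  Measure.le_iff.2 fun s hs => by
    rw [Measure.smul_apply, smul_eq_mul, ← ENNReal.ofReal_toReal (measure_ne_top μ s),
      ← ENNReal.ofReal_toReal (measure_ne_top ν s), ← ENNReal.ofReal_mul hc]
    exact ENNReal.ofReal_le_ofReal (h s hs)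

variable {f : Ω → ℝ}

theorem integral_le_mul_integral_of_le_smul (hc : 0 ≤ c) (hμν : μ ≤ ENNReal.ofReal c • ν)
    (hf : 0 ≤ f) (hfi : Integrable f ν) : ∫ x, f x ∂μ ≤ c * ∫ x, f x ∂ν :=
  calc ∫ x, f x ∂μ ≤ ∫ x, f x ∂(ENNReal.ofReal c • ν) :=
        integral_mono_measure hμν (ae_of_all _ hf) (hfi.smul_measure ENNReal.ofReal_ne_top)
    _ = c * ∫ x, f x ∂ν := by rw [integral_smul_measure, ENNReal.toReal_ofReal hc, smul_eq_mul]

theorem mul_integral_le_integral_of_smul_le (hc : 0 ≤ c) (hνμ : ENNReal.ofReal c • ν ≤ μ)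
    (hf : 0 ≤ f) (hfi : Integrable f μ) : c * ∫ x, f x ∂ν ≤ ∫ x, f x ∂μ :=
  calc c * ∫ x, f x ∂ν = ∫ x, f x ∂(ENNReal.ofReal c • ν) := by
        rw [integral_smul_measure, ENNReal.toReal_ofReal hc, smul_eq_mul]
    _ ≤ ∫ x, f x ∂μ := integral_mono_measure hνμ (ae_of_all _ hf) hfi

theorem abs_integral_le_of_le_smul (hc : 0 ≤ c) (hμν : μ ≤ ENNReal.ofReal c • ν)
    (hf : 0 ≤ f) (hfi : Integrable f ν) {B : ℝ} (hB : 0 ≤ B) {g : Ω → ℝ}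
    (hg : ∀ x, |g x| ≤ B * f x) : |∫ x, g x ∂μ| ≤ B * (c * ∫ x, f x ∂ν) := by
  have hfμ : Integrable f μ := (hfi.smul_measure ENNReal.ofReal_ne_top).mono_measure hμν
  calc |∫ x, g x ∂μ| ≤ ∫ x, |g x| ∂μ := abs_integral_le_integral_abs
    _ ≤ ∫ x, B * f x ∂μ :=
      integral_mono_of_nonneg (ae_of_all _ fun _ => abs_nonneg _) (hfμ.const_mul B)
        (ae_of_all _ hg)
    _ = B * ∫ x, f x ∂μ := integral_const_mul B f
    _ ≤ B * (c * ∫ x, f x ∂ν) :=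
      mul_le_mul_of_nonneg_left (integral_le_mul_integral_of_le_smul hc hμν hf hfi) hB

end MeasureTheory

theorem resolvent_sub_eq_inverse_mul {R A : Type*} [CommRing R] [Ring A] [Algebra R A] {a : A}
    {r s : R} (hr : r ∈ resolventSet R a) :
    resolvent a (r - s) = Ring.inverse (1 - s • resolvent a r) * resolvent a r := by
  have hfactor :
      algebraMap R A (r - s) - a = (algebraMap R A r - a) * (1 - s • resolvent a r) := by
    rw [mul_sub, mul_one, mul_smul_comm, resolvent, Ring.mul_inverse_cancel _ hr, map_sub,
      Algebra.algebraMap_eq_smul_one s]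
    abel
  rw [resolvent, hfactor, Ring.inverse_mul (Or.inl hr), resolvent]

namespace ContinuousLinearMap

variable {E : Type*} [NormedAddCommGroup E] [NormedSpace ℝ E] {C : ProperCone ℝ E}
  {T : E →L[ℝ] E}

theorem mapsTo_pow (hT : MapsTo T C C) (n : ℕ) : MapsTo ⇑(T ^ n) C C := by
  induction n with
  | zero => exact mapsTo_id _
  | succ n ih => rw [pow_succ]; exact ih.comp hT

theorem mapsTo_smul (hT : MapsTo T C C) {t : ℝ} (ht : 0 ≤ t) : MapsTo ⇑(t • T) C C :=
  fun _ hx => C.smul_mem (hT hx) ht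

theorem mapsTo_sum {ι : Type*} (s : Finset ι) {F : ι → E →L[ℝ] E}
    (hF : ∀ i ∈ s, MapsTo (F i) C C) : MapsTo ⇑(∑ i ∈ s, F i) C C := fun x hx => by
  rw [sum_apply]
  exact sum_mem fun i hi => hF i hi hx

variable (C) in
theorem isClosed_setOf_mapsTo : IsClosed {T : E →L[ℝ] E | MapsTo T C C} := by
  simp only [MapsTo, ofPred_forall]
  exact isClosed_biInter fun x _ =>
    C.isClosed.preimage (ContinuousLinearMap.apply ℝ E x).continuous

variable [CompleteSpace E]

theorem mapsTo_inverse_one_sub (hT : MapsTo T C C) (h : ‖T‖ < 1) :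
    MapsTo ⇑(Ring.inverse (1 - T)) C C := by
  rw [NormedRing.inverse_one_sub T h]
  exact (isClosed_setOf_mapsTo C).mem_of_tendsto
    (summable_geometric_of_norm_lt_one h).hasSum.tendsto_sum_nat
    (Eventually.of_forall fun n => mapsTo_sum _ fun i _ => mapsTo_pow hT i)

theorem mapsTo_resolvent_of_norm_lt (hT : MapsTo T C C) {μ : ℝ} (hμ : ‖T‖ < μ) :
    MapsTo ⇑(resolvent T μ) C C := by
  have hμ0 : 0 < μ := (norm_nonneg T).trans_lt hμ
  have key := spectrum.units_smul_resolvent_self (r := Units.mk0 μ hμ0.ne') (a := T)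
  simp only [Units.smul_def, Units.val_mk0, Units.val_inv_eq_inv_val, resolvent, map_one] at key
  have : resolvent T μ = μ⁻¹ • Ring.inverse (1 - μ⁻¹ • T) := by
    rw [← key, smul_smul, inv_mul_cancel₀ hμ0.ne', one_smul, resolvent]
  rw [this]
  refine mapsTo_smul (mapsTo_inverse_one_sub (mapsTo_smul hT (by positivity)) ?_) (by positivity)
  rw [norm_smul, Real.norm_of_nonneg (by positivity), inv_mul_lt_iff₀ hμ0, mul_one]
  exact hμ

theorem mapsTo_resolvent_sub {μ : ℝ} (hμ : μ ∈ resolventSet ℝ T) (hR : MapsTo ⇑(resolvent T μ) C C)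
    {t : ℝ} (ht : 0 ≤ t) (htR : t * ‖resolvent T μ‖ < 1) :
    MapsTo ⇑(resolvent T (μ - t)) C C := by
  rw [resolvent_sub_eq_inverse_mul hμ]
  refine (mapsTo_inverse_one_sub (mapsTo_smul hR ht) ?_).comp hR
  rwa [norm_smul, Real.norm_of_nonneg ht]

/-- Real induction downwards from `max c (‖T‖ + 1)`: positivity of `resolvent T ξ` spreads to
`[ξ - r, ξ]` whenever `r * ‖resolvent T ξ‖ < 1`, and positive operators form a closed set. -/
theorem mapsTo_resolvent_of_Ici_subset (hT : MapsTo T C C) {c : ℝ}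
    (hc : Ici c ⊆ resolventSet ℝ T) {μ : ℝ} (hμ : c ≤ μ) : MapsTo ⇑(resolvent T μ) C C := by
  set M := max c (‖T‖ + 1)
  rcases lt_or_ge ‖T‖ μ with hTμ | hμT
  · exact mapsTo_resolvent_of_norm_lt hT hTμ
  set s := {ξ : ℝ | MapsTo ⇑(resolvent T ξ) C C}
  have hclosed : IsClosed (s ∩ Icc c M) := by
    have hcont : ContinuousOn (resolvent T) (Icc c M) := fun ξ hξ =>
      (spectrum.hasDerivAt_resolvent_const_left (hc hξ.1)).continuousAt.continuousWithinAt
    rw [inter_comm]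
    exact hcont.preimage_isClosed_of_isClosed isClosed_Icc (isClosed_setOf_mapsTo C)
  have hM : M ∈ s := mapsTo_resolvent_of_norm_lt hT (by grind)
  refine hclosed.Icc_subset_of_forall_exists_lt hM ?_ ⟨hμ, by grind⟩
  rintro ξ ⟨hξs, hξc, -⟩ η hηξ
  set r := (‖resolvent T ξ‖ + 1)⁻¹
  have hr : 0 < r := by positivity
  refine ⟨max η (ξ - r / 2), ?_, le_max_left _ _, max_lt hηξ (by linarith)⟩
  rw [← sub_sub_cancel ξ (max η (ξ - r / 2))]
  refine mapsTo_resolvent_sub (hc hξc.le) hξs (by grind) ?_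
  have hrR : r * ‖resolvent T ξ‖ < 1 := by
    rw [inv_mul_lt_iff₀ (by positivity)]
    linarith
  calc (ξ - max η (ξ - r / 2)) * ‖resolvent T ξ‖ ≤ r * ‖resolvent T ξ‖ :=
        mul_le_mul_of_nonneg_right (by grind) (norm_nonneg _)
    _ < 1 := hrR

theorem ofReal_le_spectralRadius_of_sub_smul_mem (hC : (C : ConvexCone ℝ E).Salient)
    (hT : MapsTo T C C) {k : E} (hk : k ∈ C) (hk0 : k ≠ 0) {c : ℝ} (hTk : T k - c • k ∈ C) :
    ENNReal.ofReal c ≤ spectralRadius ℝ T := by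
  by_contra! hlt
  have hc : Ici c ⊆ resolventSet ℝ T := fun μ hμ =>
    spectrum.mem_resolventSet_of_spectralRadius_lt <| hlt.trans_le <| by
      rw [← enorm_eq_nnnorm, ← ofReal_norm]
      exact ENNReal.ofReal_le_ofReal (hμ.trans (le_abs_self μ))
  have hinv : resolvent T c * (algebraMap ℝ _ c - T) = 1 :=
    Ring.inverse_mul_cancel _ (hc self_mem_Ici)
  have hneg : -k = resolvent T c (T k - c • k) := by
    have := congr($hinv k)
    rw [← neg_sub, map_neg]
    simpa [Algebra.algebraMap_eq_smul_one] using congr(-$this).symm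
  exact hC k hk hk0 (hneg ▸ mapsTo_resolvent_of_Ici_subset hT hc le_rfl hTk)

end ContinuousLinearMap

section LInfty

variable {Ω : Type*}

variable (Ω) in
noncomputable def lpNonnegCone : ProperCone ℝ ℓ^∞(Ω, ℝ) :=
  ⨅ x, (ProperCone.positive ℝ ℝ).comap (lp.evalCLM ℝ (fun _ : Ω => ℝ) ∞ x)

theorem mem_lpNonnegCone {g : ℓ^∞(Ω, ℝ)} : g ∈ lpNonnegCone Ω ↔ ∀ x, 0 ≤ g x := by
  simp only [lpNonnegCone, ClosedSubmodule.mem_iInf, ProperCone.mem_comap, ProperCone.mem_positive]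
  rfl

theorem salient_lpNonnegCone : (lpNonnegCone Ω : ConvexCone ℝ ℓ^∞(Ω, ℝ)).Salient := by
  intro g hg hg0 hng
  replace hg := mem_lpNonnegCone.1 hg
  replace hng := mem_lpNonnegCone.1 hng
  refine hg0 (lp.ext (funext fun x => le_antisymm ?_ (hg x)))
  simpa using hng x

variable [MeasurableSpace Ω]

theorem integrable_coe_of_measurable {g : ℓ^∞(Ω, ℝ)} (hg : Measurable g) (μ : Measure Ω)
    [IsFiniteMeasure μ] : Integrable g μ :=
  Integrable.of_bound hg.aestronglyMeasurable ‖g‖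
    (ae_of_all _ fun x => lp.norm_apply_le_norm ENNReal.top_ne_zero g x)

variable {κ : Ω → Measure Ω} {ν : Measure Ω}
  {K : ℓ^∞(Ω, ℝ) →L[ℝ] ℓ^∞(Ω, ℝ)} {k : ℓ^∞(Ω, ℝ)}

theorem mapsTo_lpNonnegCone (hK : ∀ g x, K g x = ∫ ξ, g ξ ∂κ x) :
    MapsTo K (lpNonnegCone Ω) (lpNonnegCone Ω) := fun g hg => by
  rw [SetLike.mem_coe, mem_lpNonnegCone] at hg ⊢
  exact fun x => (hK g x).symm ▸ integral_nonneg hg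

theorem sub_smul_mem_lpNonnegCone [∀ x, IsFiniteMeasure (κ x)]
    (hK : ∀ g x, K g x = ∫ ξ, g ξ ∂κ x) (hkm : Measurable k) (hk : ∀ x, 0 ≤ k x) {δ : ℝ}
    (hδ : 0 ≤ δ) (hκ : ∀ x, ENNReal.ofReal (δ * k x) • ν ≤ κ x) :
    K k - (δ * ∫ ξ, k ξ ∂ν) • k ∈ lpNonnegCone Ω := by
  rw [mem_lpNonnegCone]
  intro x
  have := mul_integral_le_integral_of_smul_le (mul_nonneg hδ (hk x)) (hκ x) hk
    (integrable_coe_of_measurable hkm (κ x))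
  simp only [lp.coeFn_sub, lp.coeFn_smul, Pi.sub_apply, Pi.smul_apply, smul_eq_mul, hK]
  linarith

theorem abs_pow_succ_apply_le [IsFiniteMeasure ν] (hK : ∀ g x, K g x = ∫ ξ, g ξ ∂κ x)
    (hkm : Measurable k) (hk : ∀ x, 0 ≤ k x) (hκ : ∀ x, κ x ≤ ENNReal.ofReal (k x) • ν) (n : ℕ)
    (g : ℓ^∞(Ω, ℝ)) (x : Ω) :
    |(K ^ (n + 1)) g x| ≤ ‖g‖ * ν.real univ * (∫ ξ, k ξ ∂ν) ^ n * k x := by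
  induction n generalizing x with
  | zero =>
    rw [pow_one, hK]
    have hg : ∀ ξ, |g ξ| ≤ ‖g‖ * 1 := fun ξ => by
      simpa using lp.norm_apply_le_norm ENNReal.top_ne_zero g ξ
    have := abs_integral_le_of_le_smul (hk x) (hκ x) (fun _ => zero_le_one) (integrable_const 1)
      (norm_nonneg g) hg
    rw [integral_const, smul_eq_mul, mul_one] at this
    exact this.trans_eq (by ring)
  | succ n ih =>
    rw [pow_succ', mul_apply_eq_comp, hK]
    have hI : 0 ≤ ∫ ξ, k ξ ∂ν := integral_nonneg hk
    refine (abs_integral_le_of_le_smul (hk x) (hκ x) hk (integrable_coe_of_measurable hkm ν)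
      (by positivity) ih).trans_eq (by ring)

theorem norm_pow_succ_le [IsFiniteMeasure ν] (hK : ∀ g x, K g x = ∫ ξ, g ξ ∂κ x)
    (hkm : Measurable k) (hk : ∀ x, 0 ≤ k x) (hκ : ∀ x, κ x ≤ ENNReal.ofReal (k x) • ν) (n : ℕ) :
    ‖K ^ (n + 1)‖ ≤ ν.real univ * ‖k‖ * (∫ ξ, k ξ ∂ν) ^ n := by
  have hI : 0 ≤ ∫ ξ, k ξ ∂ν := integral_nonneg hk
  refine ContinuousLinearMap.opNorm_le_bound _ (by positivity) fun g =>
    lp.norm_le_of_forall_le (by positivity) fun x => ?_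
  calc ‖(K ^ (n + 1)) g x‖ ≤ ‖g‖ * ν.real univ * (∫ ξ, k ξ ∂ν) ^ n * k x :=
        abs_pow_succ_apply_le hK hkm hk hκ n g x
    _ ≤ ‖g‖ * ν.real univ * (∫ ξ, k ξ ∂ν) ^ n * ‖k‖ := by
        gcongr
        exact (le_abs_self _).trans (lp.norm_apply_le_norm ENNReal.top_ne_zero k x)
    _ = ν.real univ * ‖k‖ * (∫ ξ, k ξ ∂ν) ^ n * ‖g‖ := by ring

end LInfty

theorem stmt8_general {Ω : Type*} [MeasurableSpace Ω]
    (κ : Ω → Measure Ω) [∀ x, IsFiniteMeasure (κ x)]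
    (ν : Measure Ω) [IsFiniteMeasure ν]
    (k0 : Ω → ℝ) (hk0m : Measurable k0) (hk0nn : ∀ x, 0 ≤ k0 x)
    (hk0b : ∃ C, ∀ x, k0 x ≤ C) (hk0ne : k0 ≠ 0)
    (δ : ℝ) (hδ0 : 0 < δ)
    (hsep : ∀ s : Set Ω, MeasurableSet s → ∀ x,
      δ * (ν s).toReal * k0 x ≤ (κ x s).toReal ∧ (κ x s).toReal ≤ (ν s).toReal * k0 x)
    (K : lp (fun _ : Ω => ℝ) ⊤ →L[ℝ] lp (fun _ : Ω => ℝ) ⊤)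
    (hK : ∀ g : lp (fun _ : Ω => ℝ) ⊤, ∀ x : Ω,
      (K g : ∀ _ : Ω, ℝ) x = ∫ ξ, (g : ∀ _ : Ω, ℝ) ξ ∂ κ x) :
    ENNReal.ofReal (δ * ∫ x, k0 x ∂ν) ≤ spectralRadius ℝ K ∧
    spectralRadius ℝ K ≤ ENNReal.ofReal (∫ x, k0 x ∂ν) ∧
    (0 < spectralRadius ℝ K ↔ 0 < ∫ x, k0 x ∂ν) := by
  obtain ⟨C, hC⟩ := hk0b
  let k : ℓ^∞(Ω, ℝ) := ⟨k0, memℓp_infty ⟨C, by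
    rintro _ ⟨x, rfl⟩
    exact (Real.norm_of_nonneg (hk0nn x)).trans_le (hC x)⟩⟩
  have hκ_le : ∀ x, κ x ≤ ENNReal.ofReal (k0 x) • ν := fun x =>
    Measure.le_ofReal_smul_of_toReal_le (hk0nn x) fun s hs => by linarith [(hsep s hs x).2]
  have hκ_ge : ∀ x, ENNReal.ofReal (δ * k0 x) • ν ≤ κ x := fun x =>
    Measure.ofReal_smul_le_of_le_toReal (by nlinarith [hk0nn x]) fun s hs => by
      linarith [(hsep s hs x).1]
  have hupper : spectralRadius ℝ K ≤ ENNReal.ofReal (∫ x, k0 x ∂ν) :=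
    spectrum.spectralRadius_le_of_norm_pow_succ_le (integral_nonneg hk0nn)
      (norm_pow_succ_le (k := k) hK hk0m hk0nn hκ_le)
  have hlower : ENNReal.ofReal (δ * ∫ x, k0 x ∂ν) ≤ spectralRadius ℝ K :=
    ContinuousLinearMap.ofReal_le_spectralRadius_of_sub_smul_mem salient_lpNonnegCone
      (mapsTo_lpNonnegCone hK) (mem_lpNonnegCone.2 hk0nn) (fun h => hk0ne (lp.ext_iff.1 h))
      (sub_smul_mem_lpNonnegCone (k := k) hK hk0m hk0nn hδ0.le hκ_ge)
  refine ⟨hlower, hupper, fun h => ENNReal.ofReal_pos.1 (h.trans_le hupper), fun h => ?_⟩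
  exact (ENNReal.ofReal_pos.2 (mul_pos hδ0 h)).trans_le hlower

/-- For a semi-separable measure kernel (δ·ν(ω)·k₀(x) ≤ κ(ω,x) ≤ ν(ω)·k₀(x)),
the spectral radius R₀ of the induced next generation operator K on ℓ∞(Ω)
satisfies δ·∫ k₀ dν ≤ R₀ ≤ ∫ k₀ dν; in particular R₀ > 0 iff ∫ k₀ dν > 0. -/
theorem stmt8 {Ω : Type*} [MeasurableSpace Ω]
    (κ : Ω → Measure Ω) [∀ x, IsFiniteMeasure (κ x)]
    (ν : Measure Ω) [IsFiniteMeasure ν] (hν : ν ≠ 0)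
    (k0 : Ω → ℝ) (hk0m : Measurable k0) (hk0nn : ∀ x, 0 ≤ k0 x)
    (hk0b : ∃ C, ∀ x, k0 x ≤ C) (hk0ne : k0 ≠ 0)
    (δ : ℝ) (hδ0 : 0 < δ) (hδ1 : δ ≤ 1)
    (hsep : ∀ s : Set Ω, MeasurableSet s → ∀ x,
      δ * (ν s).toReal * k0 x ≤ (κ x s).toReal ∧ (κ x s).toReal ≤ (ν s).toReal * k0 x)
    (K : lp (fun _ : Ω => ℝ) ⊤ →L[ℝ] lp (fun _ : Ω => ℝ) ⊤)
    (hK : ∀ g : lp (fun _ : Ω => ℝ) ⊤, ∀ x : Ω,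
      (K g : ∀ _ : Ω, ℝ) x = ∫ ξ, (g : ∀ _ : Ω, ℝ) ξ ∂ κ x) :
    ENNReal.ofReal (δ * ∫ x, k0 x ∂ν) ≤ spectralRadius ℝ K ∧
    spectralRadius ℝ K ≤ ENNReal.ofReal (∫ x, k0 x ∂ν) ∧
    (0 < spectralRadius ℝ K ↔ 0 < ∫ x, k0 x ∂ν) :=
  stmt8_general κ ν k0 hk0m hk0nn hk0b hk0ne δ hδ0 hsep K hK
end

section
/- Let κ be a semi-separable measure kernel with R₀ ≤ 1. Then the zero function is the only w ∈ M^b₊(Ω) with w = F(w). -/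
/-!
Write `f y = 1 - exp (-y)`, so that `f (y / 2) = f y / 2 + f (y / 2) ^ 2 / 2`. For a nonzero
fixed point `w = F w`, integrating this identity against `κ x` and using
`δ k₀(x) ν ≤ κ x ≤ k₀(x) ν` turns the square term into a uniform gain:
`K (w / 2) ≥ F (w / 2) ≥ (1 + η) (w / 2)` with `η = δ ∫ f (w / 2) ^ 2 dν / ∫ f w dν > 0`.

On the other hand the resolvent `(λ - K)⁻¹` of the positive operator `K` is positive for every
`λ > R₀`: for large `λ` it is a Neumann series of positive operators, and one walks down to any
`λ > R₀` in steps shorter than the inverse of a bound for the resolvent on a compact interval,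
each step again being a Neumann series. Applying `(1 + η - K)⁻¹` to
`(1 + η) (w / 2) - K (w / 2) ≤ 0` gives `w / 2 ≤ 0`.
-/

open MeasureTheory

theorem spectrum.Ici_subset_resolventSet_of_spectralRadius_le {A : Type*} [NormedRing A]
    [NormedAlgebra ℝ A] {K : A} {r : NNReal} {s : ℝ} (hR : spectralRadius ℝ K ≤ r) (hrs : r < s) :
    Set.Ici s ⊆ resolventSet ℝ K := fun t ht =>
  spectrum.mem_resolventSet_of_spectralRadius_lt <| hR.trans_lt <| ENNReal.coe_lt_coe.mpr <| by
    rw [← NNReal.coe_lt_coe, coe_nnnorm, Real.norm_of_nonneg (r.2.trans (hrs.le.trans ht))]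
    exact hrs.trans_le ht

section ResolventPositivity

variable {A : Type*} [NormedRing A] [CompleteSpace A] {P : Subsemiring A}

theorem Subsemiring.ringInverse_one_sub_mem (hP : IsClosed (P : Set A)) {t : A} (ht : t ∈ P)
    (ht1 : ‖t‖ < 1) : Ring.inverse (1 - t) ∈ P :=
  hP.mem_of_tendsto (hasSum_geom_series_inverse t ht1).tendsto_sum_nat
    (.of_forall fun _ => P.sum_mem fun i _ => P.pow_mem ht i)

theorem Subsemiring.ringInverse_sub_mem (hP : IsClosed (P : Set A)) {x t : A} (hx : IsUnit x)
    (hxP : Ring.inverse x ∈ P) (ht : t ∈ P) (hxt : ‖Ring.inverse x * t‖ < 1) :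
    Ring.inverse (x - t) ∈ P := by
  have hfac : x - t = x * (1 - Ring.inverse x * t) := by
    rw [mul_sub, mul_one, ← mul_assoc, Ring.mul_inverse_cancel x hx, one_mul]
  rw [hfac, Ring.inverse_mul (.inl hx)]
  exact P.mul_mem (ringInverse_one_sub_mem hP (P.mul_mem hxP ht) hxt) hxP

variable [NormedAlgebra ℝ A] (halg : ∀ c : ℝ, 0 ≤ c → algebraMap ℝ A c ∈ P)
include halg

theorem resolvent_mem_of_norm_lt (hP : IsClosed (P : Set A)) {K : A} (hK : K ∈ P) {r : ℝ}
    (hr : ‖K‖ < r) : resolvent K r ∈ P := by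
  have hr0 : 0 < r := (norm_nonneg K).trans_lt hr
  have hunit : IsUnit (algebraMap ℝ A r) := (isUnit_iff_ne_zero.mpr hr0.ne').map _
  have hinv : Ring.inverse (algebraMap ℝ A r) = algebraMap ℝ A r⁻¹ := by
    simpa using (Ring.inverse_mul_eq_iff_eq_mul _ 1 _ hunit).mpr
      (by rw [← map_mul, mul_inv_cancel₀ hr0.ne', map_one])
  refine P.ringInverse_sub_mem hP hunit ?_ hK ?_
  · rw [hinv]; exact halg _ (inv_nonneg.mpr hr0.le)
  · rw [hinv, ← Algebra.smul_def, norm_smul, Real.norm_of_nonneg (inv_nonneg.mpr hr0.le),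
      inv_mul_lt_one₀ hr0]
    exact hr

theorem resolvent_sub_mem (hP : IsClosed (P : Set A)) {K : A} {r s : ℝ}
    (hr : r ∈ resolventSet ℝ K) (hRP : resolvent K r ∈ P) (hs : 0 ≤ s)
    (hsR : s * ‖resolvent K r‖ < 1) : resolvent K (r - s) ∈ P := by
  have hsub : algebraMap ℝ A (r - s) - K = (algebraMap ℝ A r - K) - algebraMap ℝ A s := by
    rw [map_sub]; abel
  rw [resolvent, hsub]
  refine P.ringInverse_sub_mem hP hr hRP (halg s hs) ?_
  rw [← Algebra.commutes, ← Algebra.smul_def, norm_smul, Real.norm_of_nonneg hs]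
  exact hsR

theorem resolvent_mem_of_Ici_subset_resolventSet (hP : IsClosed (P : Set A)) {K : A} (hK : K ∈ P)
    {μ : ℝ} (hρ : Set.Ici μ ⊆ resolventSet ℝ K) : resolvent K μ ∈ P := by
  set L := max μ (‖K‖ + 1)
  have hμL : μ ≤ L := le_max_left _ _
  obtain ⟨M, hM⟩ := (isCompact_Icc (a := μ) (b := L)).exists_bound_of_continuousOn fun r hr =>
      (spectrum.hasDerivAt_resolvent_const_left (hρ hr.1)).continuousAt.continuousWithinAt
  have hM0 : 0 ≤ M := (norm_nonneg _).trans (hM μ ⟨le_rfl, hμL⟩)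
  obtain ⟨N, hN⟩ := exists_nat_gt ((L - μ) * M)
  have hN0 : (0 : ℝ) < N := (mul_nonneg (sub_nonneg.mpr hμL) hM0).trans_lt hN
  set h := (L - μ) / N
  have hh : 0 ≤ h := div_nonneg (sub_nonneg.mpr hμL) hN0.le
  have hNh : (N : ℝ) * h = L - μ := mul_div_cancel₀ _ hN0.ne'
  -- descend from `L` to `μ` in `N` steps of length `h < 1 / M`
  have hstep : ∀ n ≤ N, resolvent K (L - n * h) ∈ P := by
    intro n
    induction n with
    | zero =>
      intro _
      simpa using resolvent_mem_of_norm_lt halg hP hK (by simp [L] : ‖K‖ < L)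
    | succ n ih =>
      intro hn
      have hmem : L - n * h ∈ Set.Icc μ L := by
        have : (n : ℝ) * h ≤ N * h := by gcongr; exact_mod_cast (Nat.le_succ n).trans hn
        constructor <;> nlinarith [mul_nonneg (Nat.cast_nonneg n) hh]
      have := resolvent_sub_mem halg hP (hρ hmem.1) (ih (by omega)) hh ?_
      · convert this using 2; push_cast; ring
      calc h * ‖resolvent K (L - n * h)‖ ≤ h * M := mul_le_mul_of_nonneg_left (hM _ hmem) hh
        _ < 1 := by rw [div_mul_eq_mul_div, div_lt_one hN0]; exact hN
  convert hstep N le_rfl using 2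
  linarith

end ResolventPositivity

section PositiveOperators

variable (Ω : Type*) (p : ENNReal) [Fact (1 ≤ p)]

def lp.positiveOperators : Subsemiring (lp (fun _ : Ω => ℝ) p →L[ℝ] lp (fun _ : Ω => ℝ) p) where
  carrier := {T | ∀ g : lp (fun _ : Ω => ℝ) p, (∀ x, 0 ≤ g x) → ∀ x, 0 ≤ T g x}
  one_mem' _ hg := hg
  mul_mem' hS hT g hg := hS _ (hT g hg)
  zero_mem' _ _ _ := le_rfl
  add_mem' hS hT g hg x := add_nonneg (hS g hg x) (hT g hg x)

variable {Ω p}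

theorem lp.isClosed_positiveOperators : IsClosed (SetLike.coe (lp.positiveOperators Ω p)) := by
  have : SetLike.coe (lp.positiveOperators Ω p) =
      ⋂ g : {g : lp (fun _ : Ω => ℝ) p // ∀ x, 0 ≤ g x}, ⋂ x, {T | 0 ≤ T g x} := by
    ext T; simp [lp.positiveOperators]
  rw [this]
  exact isClosed_iInter fun g => isClosed_iInter fun x => isClosed_le continuous_const <|
    (lp.evalCLM ℝ (fun _ : Ω => ℝ) p x).continuous.comp
      (ContinuousLinearMap.apply ℝ _ (g : lp (fun _ : Ω => ℝ) p)).continuous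

theorem lp.algebraMap_mem_positiveOperators {c : ℝ} (hc : 0 ≤ c) :
    algebraMap ℝ _ c ∈ lp.positiveOperators Ω p := fun _ hg x =>
  mul_nonneg hc (hg x)

theorem lp.nonpos_of_smul_le_apply {K : lp (fun _ : Ω => ℝ) p →L[ℝ] lp (fun _ : Ω => ℝ) p} (hK : K ∈ lp.positiveOperators Ω p)
    {r : ℝ} (hρ : Set.Ici r ⊆ resolventSet ℝ K) {u : lp (fun _ : Ω => ℝ) p}
    (hu : ∀ x, r * u x ≤ K u x) (x : Ω) : u x ≤ 0 := by
  have hR := resolvent_mem_of_Ici_subset_resolventSet (fun _ => lp.algebraMap_mem_positiveOperators)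
    lp.isClosed_positiveOperators hK hρ
  set q := K u - r • u
  have hq : ∀ y, 0 ≤ q y := fun y => sub_nonneg.mpr (hu y)
  have hu_eq : u = -resolvent K r q := by
    have hinv : resolvent K r * (algebraMap ℝ _ r - K) = 1 :=
      Ring.inverse_mul_cancel _ (hρ (Set.mem_Ici.mpr le_rfl))
    have hXu : (algebraMap ℝ _ r - K) u = -q := by simp [q, Algebra.algebraMap_eq_smul_one]
    calc u = (resolvent K r * (algebraMap ℝ _ r - K)) u := by rw [hinv]; rfl
      _ = resolvent K r ((algebraMap ℝ _ r - K) u) := rfl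
      _ = -resolvent K r q := by rw [hXu, map_neg]
  rw [hu_eq]
  simpa using hR q hq x

end PositiveOperators

section MeasureComparison

variable {α : Type*} [MeasurableSpace α] {μ ν : Measure α}

theorem MeasureTheory.Measure.toReal_toNNReal_smul_apply {c : ℝ} (hc : 0 ≤ c) (s : Set α) :
    ((c.toNNReal • ν) s).toReal = c * (ν s).toReal := by
  simp [Measure.smul_apply, Real.coe_toNNReal c hc]

variable [IsFiniteMeasure μ] [IsFiniteMeasure ν]

theorem MeasureTheory.Measure.le_of_forall_toReal_le
    (h : ∀ s, MeasurableSet s → (μ s).toReal ≤ (ν s).toReal) : μ ≤ ν :=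
  Measure.le_iff.mpr fun s hs =>
    (ENNReal.toReal_le_toReal (measure_ne_top μ s) (measure_ne_top ν s)).mp (h s hs)

theorem MeasureTheory.integral_le_mul_integral_of_toReal_le {c : ℝ} (hc : 0 ≤ c)
    (h : ∀ s, MeasurableSet s → (μ s).toReal ≤ c * (ν s).toReal) {g : α → ℝ} (hg : 0 ≤ g)
    (hgi : Integrable g ν) : ∫ x, g x ∂μ ≤ c * ∫ x, g x ∂ν := by
  have hle : μ ≤ c.toNNReal • ν := Measure.le_of_forall_toReal_le fun s hs => by
    rw [Measure.toReal_toNNReal_smul_apply hc]; exact h s hs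
  calc ∫ x, g x ∂μ ≤ ∫ x, g x ∂(c.toNNReal • ν) :=
        integral_mono_measure hle (.of_forall hg) (hgi.smul_measure_nnreal)
    _ = c * ∫ x, g x ∂ν := by
        rw [integral_smul_nnreal_measure, NNReal.smul_def, Real.coe_toNNReal c hc, smul_eq_mul]

theorem MeasureTheory.mul_integral_le_integral_of_le_toReal {c : ℝ} (hc : 0 ≤ c)
    (h : ∀ s, MeasurableSet s → c * (ν s).toReal ≤ (μ s).toReal) {g : α → ℝ} (hg : 0 ≤ g)
    (hgi : Integrable g μ) : c * ∫ x, g x ∂ν ≤ ∫ x, g x ∂μ := by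
  have hle : c.toNNReal • ν ≤ μ := Measure.le_of_forall_toReal_le fun s hs => by
    rw [Measure.toReal_toNNReal_smul_apply hc]; exact h s hs
  calc c * ∫ x, g x ∂ν = ∫ x, g x ∂(c.toNNReal • ν) := by
        rw [integral_smul_nnreal_measure, NNReal.smul_def, Real.coe_toNNReal c hc, smul_eq_mul]
    _ ≤ ∫ x, g x ∂μ := integral_mono_measure hle (.of_forall hg) hgi

end MeasureComparison

section OneSubExpNeg

open Real

theorem one_sub_exp_neg_nonneg {y : ℝ} (hy : 0 ≤ y) : 0 ≤ 1 - exp (-y) := by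
  have := exp_le_one_iff.mpr (neg_nonpos.mpr hy)
  linarith

theorem one_sub_exp_neg_le_one (y : ℝ) : 1 - exp (-y) ≤ 1 := by
  linarith [exp_pos (-y)]

theorem one_sub_exp_neg_le_self (y : ℝ) : 1 - exp (-y) ≤ y := by
  linarith [add_one_le_exp (-y)]

theorem one_sub_exp_neg_eq_zero_iff {y : ℝ} : 1 - exp (-y) = 0 ↔ y = 0 := by
  rw [sub_eq_zero, eq_comm, exp_eq_one_iff, neg_eq_zero]

theorem one_sub_exp_neg_half (y : ℝ) :
    1 - exp (-(y / 2)) = (1 - exp (-y)) / 2 + (1 - exp (-(y / 2))) ^ 2 / 2 := by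
  have : exp (-y) = exp (-(y / 2)) ^ 2 := by rw [← exp_nat_mul]; ring_nf
  rw [this]; ring

variable {α : Type*} [MeasurableSpace α] {μ : Measure α} {w : α → ℝ}

theorem integrable_one_sub_exp_neg [IsFiniteMeasure μ] (hwm : Measurable w) (hw0 : 0 ≤ w) :
    Integrable (fun ξ => 1 - exp (-(w ξ))) μ :=
  .of_bound (by fun_prop) 1 (.of_forall fun ξ => by
    rw [norm_of_nonneg (one_sub_exp_neg_nonneg (hw0 ξ))]; exact one_sub_exp_neg_le_one _)

theorem integrable_one_sub_exp_neg_sq [IsFiniteMeasure μ] (hwm : Measurable w) (hw0 : 0 ≤ w) :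
    Integrable (fun ξ => (1 - exp (-(w ξ))) ^ 2) μ :=
  .of_bound (by fun_prop) 1 (.of_forall fun ξ => by
    have h0 := one_sub_exp_neg_nonneg (hw0 ξ)
    have h1 := one_sub_exp_neg_le_one (w ξ)
    rw [norm_of_nonneg (sq_nonneg _)]; nlinarith)

theorem integral_one_sub_exp_neg_half [IsFiniteMeasure μ] (hwm : Measurable w) (hw0 : 0 ≤ w) :
    ∫ ξ, 1 - exp (-(w ξ / 2)) ∂μ =
      (∫ ξ, 1 - exp (-(w ξ)) ∂μ) / 2 + (∫ ξ, (1 - exp (-(w ξ / 2))) ^ 2 ∂μ) / 2 := by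
  have hw2 : 0 ≤ fun ξ => w ξ / 2 := fun ξ => div_nonneg (hw0 ξ) zero_le_two
  rw [← integral_div, ← integral_div, ← integral_add
    ((integrable_one_sub_exp_neg hwm hw0).div_const 2)
    ((integrable_one_sub_exp_neg_sq (hwm.div_const 2) hw2).div_const 2)]
  exact integral_congr_ae (.of_forall fun ξ => one_sub_exp_neg_half (w ξ))

theorem integral_one_sub_exp_neg_half_sq_pos [IsFiniteMeasure μ] (hwm : Measurable w)
    (hw0 : 0 ≤ w) (h : 0 < ∫ ξ, 1 - exp (-(w ξ)) ∂μ) :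
    0 < ∫ ξ, (1 - exp (-(w ξ / 2))) ^ 2 ∂μ := by
  have hw2 : 0 ≤ fun ξ => w ξ / 2 := fun ξ => div_nonneg (hw0 ξ) zero_le_two
  have hsupp : ∀ v : α → ℝ, Function.support (fun ξ => 1 - exp (-(v ξ))) = Function.support v :=
    fun v => Set.ext fun ξ => not_congr one_sub_exp_neg_eq_zero_iff
  rw [integral_pos_iff_support_of_nonneg (fun ξ => sq_nonneg _)
    (integrable_one_sub_exp_neg_sq (hwm.div_const 2) hw2)]
  rw [integral_pos_iff_support_of_nonneg (fun ξ => one_sub_exp_neg_nonneg (hw0 ξ))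
    (integrable_one_sub_exp_neg hwm hw0)] at h
  rwa [Function.support_pow _ two_ne_zero, hsupp, Function.support_div, Function.support_const
    two_ne_zero, Set.inter_univ, ← hsupp]

end OneSubExpNeg

section SemiSeparable

variable {Ω : Type*} [MeasurableSpace Ω] {κ : Ω → Measure Ω} [∀ x, IsFiniteMeasure (κ x)]
  {ν : Measure Ω} [IsFiniteMeasure ν] {k0 : Ω → ℝ} {δ : ℝ} {w : Ω → ℝ}

theorem fixedPoint_le_mul_integral (hk0 : ∀ x, 0 ≤ k0 x)
    (hκν : ∀ s, MeasurableSet s → ∀ x, (κ x s).toReal ≤ (ν s).toReal * k0 x)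
    (hwm : Measurable w) (hw0 : 0 ≤ w) (hfix : ∀ x, w x = ∫ ξ, (1 - Real.exp (-(w ξ))) ∂κ x)
    (x : Ω) : w x ≤ k0 x * ∫ ξ, (1 - Real.exp (-(w ξ))) ∂ν := by
  rw [hfix x]
  exact integral_le_mul_integral_of_toReal_le (hk0 x)
    (fun s hs => (hκν s hs x).trans_eq (mul_comm _ _))
    (fun ξ => one_sub_exp_neg_nonneg (hw0 ξ)) (integrable_one_sub_exp_neg hwm hw0)

theorem exists_one_add_mul_half_le_integral_half (hk0 : ∀ x, 0 ≤ k0 x) (hδ : 0 < δ)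
    (hsep : ∀ s : Set Ω, MeasurableSet s → ∀ x,
      δ * (ν s).toReal * k0 x ≤ (κ x s).toReal ∧ (κ x s).toReal ≤ (ν s).toReal * k0 x)
    (hwm : Measurable w) (hw0 : 0 ≤ w) {C : ℝ} (hwC : ∀ x, w x ≤ C)
    (hfix : ∀ x, w x = ∫ ξ, (1 - Real.exp (-(w ξ))) ∂κ x)
    (ha : 0 < ∫ ξ, (1 - Real.exp (-(w ξ))) ∂ν) :
    ∃ η > 0, ∀ x, (1 + η) * (w x / 2) ≤ ∫ ξ, w ξ / 2 ∂κ x := by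
  set a := ∫ ξ, (1 - Real.exp (-(w ξ))) ∂ν
  set b := ∫ ξ, (1 - Real.exp (-(w ξ / 2))) ^ 2 ∂ν
  have hb : 0 < b := integral_one_sub_exp_neg_half_sq_pos hwm hw0 ha
  have hw2 : 0 ≤ fun ξ => w ξ / 2 := fun ξ => div_nonneg (hw0 ξ) zero_le_two
  refine ⟨δ * b / a, by positivity, fun x => ?_⟩
  have hwa : w x / a ≤ k0 x :=
    (div_le_iff₀ ha).mpr (fixedPoint_le_mul_integral hk0 (fun s hs x => (hsep s hs x).2)
      hwm hw0 hfix x)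
  have hlower : δ * k0 x * b ≤ ∫ ξ, (1 - Real.exp (-(w ξ / 2))) ^ 2 ∂κ x :=
    mul_integral_le_integral_of_le_toReal (mul_nonneg hδ.le (hk0 x))
      (fun s hs => by linarith [(hsep s hs x).1]) (fun ξ => sq_nonneg _)
      (integrable_one_sub_exp_neg_sq (hwm.div_const 2) hw2)
  have hw2i : Integrable (fun ξ => w ξ / 2) (κ x) :=
    .of_bound (hwm.div_const 2).aestronglyMeasurable C (.of_forall fun ξ => by
      rw [Real.norm_of_nonneg (hw2 ξ)]; exact (half_le_self (hw0 ξ)).trans (hwC ξ))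
  calc (1 + δ * b / a) * (w x / 2) = w x / 2 + δ * (w x / a) * b / 2 := by field_simp
    _ ≤ w x / 2 + δ * k0 x * b / 2 := by gcongr
    _ ≤ w x / 2 + (∫ ξ, (1 - Real.exp (-(w ξ / 2))) ^ 2 ∂κ x) / 2 := by gcongr
    _ = ∫ ξ, (1 - Real.exp (-(w ξ / 2))) ∂κ x := by
        rw [integral_one_sub_exp_neg_half hwm hw0, ← hfix x]
    _ ≤ ∫ ξ, w ξ / 2 ∂κ x :=
        integral_mono (integrable_one_sub_exp_neg (hwm.div_const 2) hw2) hw2i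
          fun ξ => one_sub_exp_neg_le_self _

end SemiSeparable

theorem stmt9_general {Ω : Type*} [MeasurableSpace Ω]
    (κ : Ω → Measure Ω) [∀ x, IsFiniteMeasure (κ x)]
    (ν : Measure Ω) [IsFiniteMeasure ν]
    (k0 : Ω → ℝ) (hk0nn : ∀ x, 0 ≤ k0 x)
    (δ : ℝ) (hδ0 : 0 < δ)
    (hsep : ∀ s : Set Ω, MeasurableSet s → ∀ x,
      δ * (ν s).toReal * k0 x ≤ (κ x s).toReal ∧ (κ x s).toReal ≤ (ν s).toReal * k0 x)
    (K : lp (fun _ : Ω => ℝ) ⊤ →L[ℝ] lp (fun _ : Ω => ℝ) ⊤)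
    (hK : ∀ g : lp (fun _ : Ω => ℝ) ⊤, ∀ x : Ω,
      (K g : ∀ _ : Ω, ℝ) x = ∫ ξ, (g : ∀ _ : Ω, ℝ) ξ ∂ κ x)
    (hR : spectralRadius ℝ K ≤ 1) :
    ∀ w : Ω → ℝ, Measurable w → (∀ x, 0 ≤ w x) → (∃ C, ∀ x, w x ≤ C) →
      (∀ x, w x = ∫ ξ, (1 - Real.exp (-(w ξ))) ∂ κ x) →
      ∀ x, w x = 0 := by
  rintro w hwm hw0 ⟨C, hwC⟩ hfix x
  rcases (integral_nonneg fun ξ => one_sub_exp_neg_nonneg (hw0 ξ) :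
    0 ≤ ∫ ξ, (1 - Real.exp (-(w ξ))) ∂ν).eq_or_lt with ha | ha
  · have := fixedPoint_le_mul_integral hk0nn (fun s hs x => (hsep s hs x).2) hwm hw0 hfix x
    exact le_antisymm (by rwa [← ha, mul_zero] at this) (hw0 x)
  obtain ⟨η, hη, hsub⟩ :=
    exists_one_add_mul_half_le_integral_half hk0nn hδ0 hsep hwm hw0 hwC hfix ha
  let u : lp (fun _ : Ω => ℝ) ⊤ := ⟨fun ξ => w ξ / 2, memℓp_infty ⟨C, by
    rintro _ ⟨ξ, rfl⟩
    show ‖w ξ / 2‖ ≤ C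
    rw [Real.norm_of_nonneg (div_nonneg (hw0 ξ) zero_le_two)]
    exact (half_le_self (hw0 ξ)).trans (hwC ξ)⟩⟩
  have hKpos : K ∈ lp.positiveOperators Ω ⊤ := fun g hg y => (hK g y).symm ▸ integral_nonneg hg
  have hu : w x / 2 ≤ 0 := lp.nonpos_of_smul_le_apply (u := u) hKpos
    (spectrum.Ici_subset_resolventSet_of_spectralRadius_le hR (by simpa using hη))
    (fun y => (hK u y).symm ▸ hsub y) x
  linarith [hw0 x]

/-- For a semi-separable measure kernel with basic reproduction number R₀ ≤ 1
(spectral radius of the induced next generation operator K on ℓ∞(Ω)),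
the zero function is the only fixed point w = F(w) in M^b₊(Ω). -/
theorem stmt9 {Ω : Type*} [MeasurableSpace Ω]
    (κ : Ω → Measure Ω) [∀ x, IsFiniteMeasure (κ x)]
    (ν : Measure Ω) [IsFiniteMeasure ν] (hν : ν ≠ 0)
    (k0 : Ω → ℝ) (hk0m : Measurable k0) (hk0nn : ∀ x, 0 ≤ k0 x)
    (hk0b : ∃ C, ∀ x, k0 x ≤ C) (hk0ne : k0 ≠ 0)
    (δ : ℝ) (hδ0 : 0 < δ) (hδ1 : δ ≤ 1)
    (hsep : ∀ s : Set Ω, MeasurableSet s → ∀ x,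
      δ * (ν s).toReal * k0 x ≤ (κ x s).toReal ∧ (κ x s).toReal ≤ (ν s).toReal * k0 x)
    (K : lp (fun _ : Ω => ℝ) ⊤ →L[ℝ] lp (fun _ : Ω => ℝ) ⊤)
    (hK : ∀ g : lp (fun _ : Ω => ℝ) ⊤, ∀ x : Ω,
      (K g : ∀ _ : Ω, ℝ) x = ∫ ξ, (g : ∀ _ : Ω, ℝ) ξ ∂ κ x)
    (hR : spectralRadius ℝ K ≤ 1) :
    ∀ w : Ω → ℝ, Measurable w → (∀ x, 0 ≤ w x) → (∃ C, ∀ x, w x ≤ C) →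
      (∀ x, w x = ∫ ξ, (1 - Real.exp (-(w ξ))) ∂ κ x) →
      ∀ x, w x = 0 :=
  stmt9_general κ ν k0 hk0nn δ hδ0 hsep K hK hR
end

section
/- Let κ be a semi-separable measure kernel. Then there exists at most one nonzero solution w ∈ M^b₊(Ω) of w = F(w). -/
open MeasureTheory

open Real in

lemma gap_lb {t r m : ℝ} (ht : 1 ≤ t) (hm : 0 ≤ m) (hr : m ≤ r) :
    (t - 1) * (1 - (1 + m) * Real.exp (-m)) ≤
      t * (1 - Real.exp (-r)) - (1 - Real.exp (-(t * r))) := by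
  have hr0 : 0 ≤ r := hm.trans hr
  have h1 : 1 + (-((t - 1) * r)) ≤ Real.exp (-((t - 1) * r)) := by
    linarith [Real.add_one_le_exp (-((t - 1) * r))]
  have h2 : Real.exp (-(t * r)) = Real.exp (-r) * Real.exp (-((t - 1) * r)) := by
    rw [← Real.exp_add]; ring_nf
  have h3 : 1 + (r - m) ≤ Real.exp (r - m) := by
    linarith [Real.add_one_le_exp (r - m)]
  have h4 : Real.exp (-m) = Real.exp (-r) * Real.exp (r - m) := by
    rw [← Real.exp_add]; ring_nf
  have hep : (0:ℝ) < Real.exp (-r) := Real.exp_pos _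
  have hA : Real.exp (-r) * (1 - (t - 1) * r) ≤ Real.exp (-(t * r)) := by
    rw [h2]; nlinarith
  have hB : (1 + r) * Real.exp (-r) ≤ (1 + m) * Real.exp (-m) := by
    have h5 : (1 + r) ≤ (1 + m) * Real.exp (r - m) := by
      nlinarith [mul_nonneg hm (sub_nonneg.mpr hr),
        mul_le_mul_of_nonneg_left h3 (by linarith : (0:ℝ) ≤ 1 + m)]
    rw [h4]
    calc (1 + r) * Real.exp (-r) ≤ ((1 + m) * Real.exp (r - m)) * Real.exp (-r) :=
          mul_le_mul_of_nonneg_right h5 hep.le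
      _ = (1 + m) * (Real.exp (-r) * Real.exp (r - m)) := by ring
  nlinarith [mul_nonneg (sub_nonneg.mpr ht) (sub_nonneg.mpr hr)]

lemma sandwich_int {Ω : Type*} [MeasurableSpace Ω]
    (κ : Ω → Measure Ω) [∀ x, IsFiniteMeasure (κ x)]
    (ν : Measure Ω) [IsFiniteMeasure ν]
    (k0 : Ω → ℝ) (hk0nn : ∀ x, 0 ≤ k0 x)
    (δ : ℝ) (hδ0 : 0 < δ)
    (hsep : ∀ s : Set Ω, MeasurableSet s → ∀ x,
      δ * (ν s).toReal * k0 x ≤ (κ x s).toReal ∧ (κ x s).toReal ≤ (ν s).toReal * k0 x)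
    (x : Ω) (g : Ω → ℝ) (hg : Measurable g) (hgnn : ∀ ξ, 0 ≤ g ξ)
    (B : ℝ) (hgb : ∀ ξ, g ξ ≤ B) :
    δ * k0 x * ∫ ξ, g ξ ∂ν ≤ ∫ ξ, g ξ ∂(κ x) ∧
      ∫ ξ, g ξ ∂(κ x) ≤ k0 x * ∫ ξ, g ξ ∂ν := by
  have hnormb : ∀ (ξ : Ω), ‖g ξ‖ ≤ B := fun ξ => by
    rw [Real.norm_eq_abs, abs_of_nonneg (hgnn ξ)]; exact hgb ξ
  have hintν : Integrable g ν :=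
    Integrable.mono' (integrable_const B) hg.aestronglyMeasurable (ae_of_all _ hnormb)
  have hintκ : Integrable g (κ x) :=
    Integrable.mono' (integrable_const B) hg.aestronglyMeasurable (ae_of_all _ hnormb)
  constructor
  · have hle : ENNReal.ofReal (δ * k0 x) • ν ≤ κ x := by
      refine Measure.le_iff.mpr fun s hs => ?_
      rw [Measure.smul_apply, smul_eq_mul]
      refine (ENNReal.toReal_le_toReal
        (ENNReal.mul_ne_top ENNReal.ofReal_ne_top (measure_ne_top ν s))
        (measure_ne_top _ _)).mp ?_
      rw [ENNReal.toReal_mul, ENNReal.toReal_ofReal (mul_nonneg hδ0.le (hk0nn x))]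
      calc δ * k0 x * (ν s).toReal = δ * (ν s).toReal * k0 x := by ring
        _ ≤ (κ x s).toReal := (hsep s hs x).1
    calc δ * k0 x * ∫ ξ, g ξ ∂ν = ∫ ξ, g ξ ∂(ENNReal.ofReal (δ * k0 x) • ν) := by
          rw [integral_smul_measure, ENNReal.toReal_ofReal (mul_nonneg hδ0.le (hk0nn x)),
            smul_eq_mul]
      _ ≤ ∫ ξ, g ξ ∂(κ x) := integral_mono_measure hle (ae_of_all _ hgnn) hintκ
  · have hle : κ x ≤ ENNReal.ofReal (k0 x) • ν := by
      refine Measure.le_iff.mpr fun s hs => ?_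
      rw [Measure.smul_apply, smul_eq_mul]
      refine (ENNReal.toReal_le_toReal (measure_ne_top _ _)
        (ENNReal.mul_ne_top ENNReal.ofReal_ne_top (measure_ne_top ν s))).mp ?_
      rw [ENNReal.toReal_mul, ENNReal.toReal_ofReal (hk0nn x)]
      calc (κ x s).toReal ≤ (ν s).toReal * k0 x := (hsep s hs x).2
        _ = k0 x * (ν s).toReal := by ring
    calc ∫ ξ, g ξ ∂(κ x) ≤ ∫ ξ, g ξ ∂(ENNReal.ofReal (k0 x) • ν) :=
          integral_mono_measure hle (ae_of_all _ hgnn)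
            (hintν.smul_measure ENNReal.ofReal_ne_top)
      _ = k0 x * ∫ ξ, g ξ ∂ν := by
          rw [integral_smul_measure, ENNReal.toReal_ofReal (hk0nn x), smul_eq_mul]

lemma key_le {Ω : Type*} [MeasurableSpace Ω]
    (κ : Ω → Measure Ω) [∀ x, IsFiniteMeasure (κ x)]
    (ν : Measure Ω) [IsFiniteMeasure ν]
    (k0 : Ω → ℝ) (hk0nn : ∀ x, 0 ≤ k0 x)
    (δ : ℝ) (hδ0 : 0 < δ)
    (hsep : ∀ s : Set Ω, MeasurableSet s → ∀ x,
      δ * (ν s).toReal * k0 x ≤ (κ x s).toReal ∧ (κ x s).toReal ≤ (ν s).toReal * k0 x)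
    (w1 w2 : Ω → ℝ)
    (hw1m : Measurable w1) (hw1nn : ∀ x, 0 ≤ w1 x)
    (hw2m : Measurable w2) (hw2nn : ∀ x, 0 ≤ w2 x)
    (hfix1 : ∀ x, w1 x = ∫ ξ, (1 - Real.exp (-(w1 ξ))) ∂ κ x)
    (hfix2 : ∀ x, w2 x = ∫ ξ, (1 - Real.exp (-(w2 ξ))) ∂ κ x)
    (hne2 : w2 ≠ 0) : ∀ x, w1 x ≤ w2 x := by
  -- basic facts about f(y) = 1 - exp(-y)
  have fnn : ∀ y : ℝ, 0 ≤ y → 0 ≤ 1 - Real.exp (-y) := fun y hy => by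
    have := Real.exp_le_one_iff.mpr (neg_nonpos.mpr hy); linarith
  have fle1 : ∀ y : ℝ, 1 - Real.exp (-y) ≤ 1 := fun y => by
    have := Real.exp_pos (-y); linarith
  have fm1 : Measurable fun ξ => 1 - Real.exp (-(w1 ξ)) :=
    measurable_const.sub (Real.measurable_exp.comp hw1m.neg)
  have fm2 : Measurable fun ξ => 1 - Real.exp (-(w2 ξ)) :=
    measurable_const.sub (Real.measurable_exp.comp hw2m.neg)
  set a1 := ∫ ξ, (1 - Real.exp (-(w1 ξ))) ∂ν with ha1
  set a2 := ∫ ξ, (1 - Real.exp (-(w2 ξ))) ∂ν with ha2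
  have sand := sandwich_int κ ν k0 hk0nn δ hδ0 hsep
  have h1up : ∀ x, w1 x ≤ k0 x * a1 := fun x => by
    rw [hfix1 x]
    exact (sand x _ fm1 (fun ξ => fnn _ (hw1nn ξ)) 1 (fun ξ => fle1 _)).2
  have h2up : ∀ x, w2 x ≤ k0 x * a2 := fun x => by
    rw [hfix2 x]
    exact (sand x _ fm2 (fun ξ => fnn _ (hw2nn ξ)) 1 (fun ξ => fle1 _)).2
  have h2lo : ∀ x, δ * k0 x * a2 ≤ w2 x := fun x => by
    rw [hfix2 x]
    exact (sand x _ fm2 (fun ξ => fnn _ (hw2nn ξ)) 1 (fun ξ => fle1 _)).1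
  have a1nn : 0 ≤ a1 := integral_nonneg fun ξ => fnn _ (hw1nn ξ)
  have a2nn : 0 ≤ a2 := integral_nonneg fun ξ => fnn _ (hw2nn ξ)
  have a2pos : 0 < a2 := by
    rcases a2nn.eq_or_lt with h | h
    · exfalso; apply hne2; funext x
      have := h2up x; rw [← h] at this
      simp only [mul_zero] at this
      exact le_antisymm this (hw2nn x)
    · exact h
  -- find a level set of w2 with positive ν-measure
  have hexm : ∃ n : ℕ, ν {ξ | 1 / (n + 1 : ℝ) ≤ w2 ξ} ≠ 0 := by
    by_contra h
    push_neg at h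
    have hsub : {ξ | 0 < w2 ξ} ⊆ ⋃ n : ℕ, {ξ | 1 / (n + 1 : ℝ) ≤ w2 ξ} := by
      intro ξ hξ
      have hξ' : 0 < w2 ξ := hξ
      obtain ⟨n, hn⟩ := exists_nat_one_div_lt hξ'
      exact Set.mem_iUnion.mpr ⟨n, hn.le⟩
    have h0 : ν {ξ | 0 < w2 ξ} = 0 :=
      measure_mono_null hsub (measure_iUnion_null h)
    have hz : a2 = 0 := by
      rw [ha2]
      apply integral_eq_zero_of_ae
      have hnm : ∀ᵐ ξ ∂ν, ξ ∉ {ξ | 0 < w2 ξ} := measure_eq_zero_iff_ae_notMem.mp h0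
      filter_upwards [hnm] with ξ hξ
      have : w2 ξ = 0 := le_antisymm (not_lt.mp hξ) (hw2nn ξ)
      simp [this]
    exact a2pos.ne' hz
  obtain ⟨n, hSne⟩ := hexm
  set m : ℝ := 1 / (n + 1 : ℝ) with hm'
  have hm : 0 < m := by positivity
  set S := {ξ | m ≤ w2 ξ} with hS
  have hSm : MeasurableSet S := measurableSet_le measurable_const hw2m
  -- the set of admissible comparison constants
  set T := {t : ℝ | 0 ≤ t ∧ ∀ x, w1 x ≤ t * w2 x} with hT
  have hda : 0 < δ * a2 := mul_pos hδ0 a2pos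
  have hT0 : a1 / (δ * a2) ∈ T := by
    refine ⟨div_nonneg a1nn hda.le, fun x => ?_⟩
    rw [div_mul_eq_mul_div, le_div_iff₀ hda]
    nlinarith [h1up x, h2lo x, hk0nn x]
  have hTne : T.Nonempty := ⟨_, hT0⟩
  have hTbdd : BddBelow T := ⟨0, fun t ht => ht.1⟩
  set t0 := sInf T with ht0
  have ht0nn : 0 ≤ t0 := le_csInf hTne fun t ht => ht.1
  have ht0le : ∀ x, w1 x ≤ t0 * w2 x := by
    intro x
    rcases (hw2nn x).eq_or_lt with h | h
    · have h2 := hT0.2 x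
      rw [← h, mul_zero] at h2 ⊢
      exact h2
    · have hlow : w1 x / w2 x ≤ t0 :=
        le_csInf hTne fun t ht => (div_le_iff₀ h).mpr (ht.2 x)
      exact (div_le_iff₀ h).mp hlow
  have ht01 : t0 ≤ 1 := by
    by_contra hgt
    push_neg at hgt
    set c := (t0 - 1) * (1 - (1 + m) * Real.exp (-m)) with hc
    have hcpos : 0 < c := by
      have h := Real.add_one_lt_exp (hm.ne' : m ≠ 0)
      have he : Real.exp (-m) * Real.exp m = 1 := by rw [← Real.exp_add]; simp
      have : 0 < 1 - (1 + m) * Real.exp (-m) := by nlinarith [Real.exp_pos (-m)]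
      exact mul_pos (by linarith) this
    set gap := fun ξ => t0 * (1 - Real.exp (-(w2 ξ))) - (1 - Real.exp (-(t0 * w2 ξ)))
      with hgapdef
    have gapnn : ∀ ξ, 0 ≤ gap ξ := fun ξ => by
      have h := gap_lb (t := t0) (r := w2 ξ) (m := 0) hgt.le le_rfl (hw2nn ξ)
      simp only [neg_zero, Real.exp_zero, mul_one, add_zero, sub_self, mul_zero] at h
      have hrfl : gap ξ = t0 * (1 - Real.exp (-(w2 ξ))) - (1 - Real.exp (-(t0 * w2 ξ))) := rfl
      rw [hrfl]; linarith
    have gapS : ∀ ξ ∈ S, c ≤ gap ξ := fun ξ hξ => gap_lb hgt.le hm.le hξ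
    have gapb : ∀ ξ, gap ξ ≤ t0 + 1 := fun ξ => by
      have e1 := Real.exp_pos (-(w2 ξ))
      have e2 := Real.exp_pos (-(t0 * w2 ξ))
      have e3 : Real.exp (-(w2 ξ)) ≤ 1 := Real.exp_le_one_iff.mpr (by linarith [hw2nn ξ])
      have e4 : Real.exp (-(t0 * w2 ξ)) ≤ 1 :=
        Real.exp_le_one_iff.mpr (neg_nonpos.mpr (mul_nonneg ht0nn (hw2nn ξ)))
      have hrfl : gap ξ = t0 * (1 - Real.exp (-(w2 ξ))) - (1 - Real.exp (-(t0 * w2 ξ))) := rfl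
      rw [hrfl]
      nlinarith [mul_nonneg ht0nn e1.le]
    have gapm : Measurable gap :=
      ((measurable_const.sub (Real.measurable_exp.comp hw2m.neg)).const_mul t0).sub
        (measurable_const.sub (Real.measurable_exp.comp (hw2m.const_mul t0).neg))
    have hνS : 0 < (ν S).toReal := ENNReal.toReal_pos hSne (measure_ne_top ν S)
    have hgapν : c * (ν S).toReal ≤ ∫ ξ, gap ξ ∂ν := by
      have hind : ∫ ξ, S.indicator (fun _ => c) ξ ∂ν = (ν S).toReal • c :=
        integral_indicator_const c hSm
      have hgapint : Integrable gap ν := by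
        refine Integrable.mono' (integrable_const (t0 + 1)) gapm.aestronglyMeasurable
          (ae_of_all _ fun ξ => ?_)
        rw [Real.norm_eq_abs, abs_of_nonneg (gapnn ξ)]; exact gapb ξ
      calc c * (ν S).toReal = ∫ ξ, S.indicator (fun _ => c) ξ ∂ν := by
            rw [hind, smul_eq_mul]; ring
        _ ≤ ∫ ξ, gap ξ ∂ν := by
            refine integral_mono ((integrable_const c).indicator hSm) hgapint fun ξ => ?_
            by_cases hξ : ξ ∈ S
            · rw [Set.indicator_of_mem hξ]; exact gapS ξ hξ
            · rw [Set.indicator_of_notMem hξ]; exact gapnn ξ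
    set ε := c * (ν S).toReal with hε
    have hεpos : 0 < ε := mul_pos hcpos hνS
    have hmain : ∀ x, w1 x ≤ (t0 - δ * ε / a2) * w2 x := by
      intro x
      have integκ : ∀ (h : Ω → ℝ), Measurable h → (∀ ξ, 0 ≤ h ξ) → (∀ ξ, h ξ ≤ t0 + 1) →
          Integrable h (κ x) := fun h hmeas hnn hb =>
        Integrable.mono' (integrable_const (t0 + 1)) hmeas.aestronglyMeasurable
          (ae_of_all _ fun ξ => by
            rw [Real.norm_eq_abs, abs_of_nonneg (hnn ξ)]; exact hb ξ)
      have if1 : Integrable (fun ξ => 1 - Real.exp (-(w1 ξ))) (κ x) :=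
        integκ _ fm1 (fun ξ => fnn _ (hw1nn ξ)) (fun ξ => (fle1 _).trans (by linarith))
      have if2 : Integrable (fun ξ => 1 - Real.exp (-(w2 ξ))) (κ x) :=
        integκ _ fm2 (fun ξ => fnn _ (hw2nn ξ)) (fun ξ => (fle1 _).trans (by linarith))
      have ift : Integrable (fun ξ => 1 - Real.exp (-(t0 * w2 ξ))) (κ x) :=
        integκ _ (measurable_const.sub (Real.measurable_exp.comp (hw2m.const_mul t0).neg))
          (fun ξ => fnn _ (mul_nonneg ht0nn (hw2nn ξ)))
          (fun ξ => (fle1 _).trans (by linarith))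
      have step1 : w1 x ≤ ∫ ξ, (1 - Real.exp (-(t0 * w2 ξ))) ∂κ x := by
        rw [hfix1 x]
        refine integral_mono if1 ift fun ξ => ?_
        have : Real.exp (-(t0 * w2 ξ)) ≤ Real.exp (-(w1 ξ)) :=
          Real.exp_le_exp.mpr (by linarith [ht0le ξ])
        linarith
      have hgapκ : ∫ ξ, gap ξ ∂κ x
          = t0 * w2 x - ∫ ξ, (1 - Real.exp (-(t0 * w2 ξ))) ∂κ x := by
        have : ∫ ξ, gap ξ ∂κ x
            = ∫ ξ, (t0 * (1 - Real.exp (-(w2 ξ))) - (1 - Real.exp (-(t0 * w2 ξ)))) ∂κ x := rfl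
        rw [this, integral_sub (if2.const_mul t0) ift, integral_const_mul, ← hfix2 x]
      have hgapκlb : δ * k0 x * ∫ ξ, gap ξ ∂ν ≤ ∫ ξ, gap ξ ∂κ x :=
        (sand x gap gapm gapnn (t0 + 1) gapb).1
      have hstep2 : δ * k0 x * ε ≤ ∫ ξ, gap ξ ∂κ x := by
        refine le_trans ?_ hgapκlb
        have : 0 ≤ δ * k0 x := mul_nonneg hδ0.le (hk0nn x)
        exact mul_le_mul_of_nonneg_left hgapν this
      have final1 : w1 x ≤ t0 * w2 x - δ * k0 x * ε := by linarith
      have final2 : δ * ε / a2 * w2 x ≤ δ * k0 x * ε := by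
        rw [div_mul_eq_mul_div, div_le_iff₀ a2pos]
        nlinarith [mul_le_mul_of_nonneg_left (h2up x) (mul_nonneg hδ0.le hεpos.le)]
      nlinarith
    set t1 := max (t0 - δ * ε / a2) 0 with ht1
    have ht1T : t1 ∈ T :=
      ⟨le_max_right _ _, fun x =>
        (hmain x).trans (mul_le_mul_of_nonneg_right (le_max_left _ _) (hw2nn x))⟩
    have hle' : t0 ≤ t1 := csInf_le hTbdd ht1T
    have hlt : t1 < t0 := by
      apply max_lt
      · have : 0 < δ * ε / a2 := by positivity
        linarith
      · linarith
    linarith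
  intro x
  calc w1 x ≤ t0 * w2 x := ht0le x
    _ ≤ 1 * w2 x := mul_le_mul_of_nonneg_right ht01 (hw2nn x)
    _ = w2 x := one_mul _

/-- For a semi-separable measure kernel, there is at most one nonzero fixed point
w = F(w) in M^b₊(Ω). -/
theorem stmt10 {Ω : Type*} [MeasurableSpace Ω]
    (κ : Ω → Measure Ω) [∀ x, IsFiniteMeasure (κ x)]
    (ν : Measure Ω) [IsFiniteMeasure ν] (hν : ν ≠ 0)
    (k0 : Ω → ℝ) (hk0m : Measurable k0) (hk0nn : ∀ x, 0 ≤ k0 x)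
    (hk0b : ∃ C, ∀ x, k0 x ≤ C) (hk0ne : k0 ≠ 0)
    (δ : ℝ) (hδ0 : 0 < δ) (hδ1 : δ ≤ 1)
    (hsep : ∀ s : Set Ω, MeasurableSet s → ∀ x,
      δ * (ν s).toReal * k0 x ≤ (κ x s).toReal ∧ (κ x s).toReal ≤ (ν s).toReal * k0 x)
    (w1 w2 : Ω → ℝ)
    (hw1m : Measurable w1) (hw1nn : ∀ x, 0 ≤ w1 x) (hw1b : ∃ C, ∀ x, w1 x ≤ C)
    (hw2m : Measurable w2) (hw2nn : ∀ x, 0 ≤ w2 x) (hw2b : ∃ C, ∀ x, w2 x ≤ C)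
    (hfix1 : ∀ x, w1 x = ∫ ξ, (1 - Real.exp (-(w1 ξ))) ∂ κ x)
    (hfix2 : ∀ x, w2 x = ∫ ξ, (1 - Real.exp (-(w2 ξ))) ∂ κ x)
    (hne1 : w1 ≠ 0) (hne2 : w2 ≠ 0) :
    w1 = w2 := by
  funext x
  exact le_antisymm
    (key_le κ ν k0 hk0nn δ hδ0 hsep w1 w2 hw1m hw1nn hw2m hw2nn hfix1 hfix2 hne2 x)
    (key_le κ ν k0 hk0nn δ hδ0 hsep w2 w1 hw2m hw2nn hw1m hw1nn hfix2 hfix1 hne1 x)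
end

section
/- Let κ be a Feller kernel on a metric space Ω dominated by a finite measure ν (κ(ω,x) ≤ ν(ω) for all ω,x). Then for every g ∈ L¹(Ω,ν), Kg is a bounded continuous function; in particular κ is a strong Feller kernel. -/
open MeasureTheory Filter
open scoped BoundedContinuousFunction

/-! Domination `κ x ≤ ν` makes `g ↦ (x ↦ ∫ g ∂κ x)` a contraction from `L¹(ν)` into the
sup norm, since `|∫ g ∂κ x| ≤ ∫ |g| ∂ν`. Bounded continuous functions are dense in `L¹(ν)`
and are mapped to continuous functions by the Feller property, so the image of any
`g ∈ L¹(ν)` is a uniform limit of continuous functions. Indicators of measurable sets give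
the strong Feller property. -/

theorem norm_integral_le_integral_norm_of_le {Ω E : Type*} [MeasurableSpace Ω]
    [NormedAddCommGroup E] [NormedSpace ℝ E] {μ ν : Measure Ω} (hμν : μ ≤ ν)
    {f : Ω → E} (hf : Integrable f ν) :
    ‖∫ ξ, f ξ ∂μ‖ ≤ ∫ ξ, ‖f ξ‖ ∂ν :=
  (norm_integral_le_integral_norm f).trans <|
    integral_mono_measure hμν (Eventually.of_forall fun _ => norm_nonneg _) hf.norm

theorem continuous_integral_of_le_of_continuous_integral_bcf {X Ω E : Type*}
    [TopologicalSpace X] [TopologicalSpace Ω] [NormalSpace Ω] [MeasurableSpace Ω]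
    [BorelSpace Ω] [NormedAddCommGroup E] [NormedSpace ℝ E]
    {μ : X → Measure Ω} {ν : Measure Ω} [ν.WeaklyRegular] (hμν : ∀ x, μ x ≤ ν)
    (hbcf : ∀ h : Ω →ᵇ E, Continuous fun x => ∫ ξ, h ξ ∂μ x)
    {g : Ω → E} (hg : Integrable g ν) :
    Continuous fun x => ∫ ξ, g ξ ∂μ x := by
  refine continuous_of_uniform_approx_of_continuous fun u hu => ?_
  obtain ⟨ε, hε, hεu⟩ := Metric.mem_uniformity_dist.1 hu
  obtain ⟨h, hgh, hh⟩ := hg.exists_boundedContinuous_integral_sub_le (half_pos hε)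
  refine ⟨_, hbcf h, fun x => hεu ?_⟩
  calc dist (∫ ξ, g ξ ∂μ x) (∫ ξ, h ξ ∂μ x) = ‖∫ ξ, g ξ - h ξ ∂μ x‖ := by
        rw [dist_eq_norm, integral_sub (hg.mono_measure (hμν x)) (hh.mono_measure (hμν x))]
    _ ≤ ∫ ξ, ‖g ξ - h ξ‖ ∂ν := norm_integral_le_integral_norm_of_le (hμν x) (hg.sub hh)
    _ ≤ ε / 2 := hgh
    _ < ε := half_lt_self hε

theorem stmt15_general {Ω : Type*} [MetricSpace Ω] [MeasurableSpace Ω] [BorelSpace Ω]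
    (κ : Ω → Measure Ω)
    (ν : Measure Ω) [IsFiniteMeasure ν]
    (hdom : ∀ s : Set Ω, MeasurableSet s → ∀ x, κ x s ≤ ν s)
    (hFeller : ∀ g : Ω → ℝ, Continuous g → (∃ C, ∀ x, |g x| ≤ C) →
      Continuous (fun x => ∫ ξ, g ξ ∂ κ x)) :
    (∀ g : Ω → ℝ, Integrable g ν →
      Continuous (fun x => ∫ ξ, g ξ ∂ κ x) ∧ ∃ C, ∀ x, |∫ ξ, g ξ ∂ κ x| ≤ C) ∧
    (∀ s : Set Ω, MeasurableSet s → Continuous (fun x => (κ x s).toReal)) := by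
  have hle : ∀ x, κ x ≤ ν := fun x => Measure.le_iff.2 fun s hs => hdom s hs x
  have hbcf : ∀ h : Ω →ᵇ ℝ, Continuous fun x => ∫ ξ, h ξ ∂κ x := fun h =>
    hFeller h h.continuous ⟨‖h‖, fun ξ => by
      simpa only [Real.norm_eq_abs] using h.norm_coe_le_norm ξ⟩
  have hL1 : ∀ g : Ω → ℝ, Integrable g ν →
      Continuous (fun x => ∫ ξ, g ξ ∂ κ x) ∧ ∃ C, ∀ x, |∫ ξ, g ξ ∂ κ x| ≤ C := fun g hg =>
    ⟨continuous_integral_of_le_of_continuous_integral_bcf hle hbcf hg,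
      ∫ ξ, ‖g ξ‖ ∂ν, fun x => norm_integral_le_integral_norm_of_le (hle x) hg⟩
  refine ⟨hL1, fun s hs => ?_⟩
  simpa only [integral_indicator_one hs, measureReal_def] using
    (hL1 (s.indicator 1) ((integrable_const 1).indicator hs)).1

/-- A Feller kernel κ dominated by a finite measure ν (κ(ω,x) ≤ ν(ω)) maps every
g ∈ L¹(Ω,ν) to a bounded continuous function Kg; in particular κ is a strong Feller
kernel. -/
theorem stmt15 {Ω : Type*} [MetricSpace Ω] [MeasurableSpace Ω] [BorelSpace Ω]
    (κ : Ω → Measure Ω) [∀ x, IsFiniteMeasure (κ x)]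
    (ν : Measure Ω) [IsFiniteMeasure ν]
    (hdom : ∀ s : Set Ω, MeasurableSet s → ∀ x, κ x s ≤ ν s)
    (hFeller : ∀ g : Ω → ℝ, Continuous g → (∃ C, ∀ x, |g x| ≤ C) →
      Continuous (fun x => ∫ ξ, g ξ ∂ κ x)) :
    (∀ g : Ω → ℝ, Integrable g ν →
      Continuous (fun x => ∫ ξ, g ξ ∂ κ x) ∧ ∃ C, ∀ x, |∫ ξ, g ξ ∂ κ x| ≤ C) ∧
    (∀ s : Set Ω, MeasurableSet s → Continuous (fun x => (κ x s).toReal)) :=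
  stmt15_general κ ν hdom hFeller
end

section
/- Let κ be a topologically irreducible Feller kernel on a metric space Ω and w̃ : Ω → ℝ₊ a bounded lower semicontinuous nonzero function with w̃(x) ≥ ∫_Ω f(w̃(ξ)) κ(dξ,x) for all x. Then w̃(x) > 0 for every x ∈ Ω. -/
/-! The set `U = {w > 0}` is open by lower semicontinuity and nonempty. If it were not all of `Ω`,
irreducibility would give `x ∉ U` with `κ x U > 0`; since `1 - exp (-w)` is positive exactly on `U`,
the inequality would force `w x ≥ ∫ (1 - exp (-w)) dκ x > 0`, contradicting `x ∉ U`. -/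

open MeasureTheory

theorem integral_one_sub_exp_neg_pos {α : Type*} [MeasurableSpace α] {μ : Measure α}
    [IsFiniteMeasure μ] {w : α → ℝ} (hw : Measurable w) (hnn : ∀ x, 0 ≤ w x)
    (hpos : 0 < μ {x | 0 < w x}) : 0 < ∫ x, (1 - Real.exp (-(w x))) ∂μ := by
  have hg_nonneg : ∀ x, 0 ≤ 1 - Real.exp (-(w x)) := fun x => by
    simpa using Real.exp_le_one_iff.mpr (neg_nonpos.mpr (hnn x))
  have hg_int : Integrable (fun x => 1 - Real.exp (-(w x))) μ := by
    refine Integrable.of_bound (measurable_const.sub hw.neg.exp).aestronglyMeasurable 1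
      (ae_of_all _ fun x => ?_)
    rw [Real.norm_of_nonneg (hg_nonneg x)]
    linarith [Real.exp_pos (-(w x))]
  have h_support : Function.support (fun x => 1 - Real.exp (-(w x))) = {x | 0 < w x} := by
    ext x
    simp only [Function.mem_support, ne_eq, sub_eq_zero,
      eq_comm (a := (1 : ℝ)), Real.exp_eq_one_iff, neg_eq_zero]
    exact (hnn x).lt_iff_ne'.symm
  rwa [integral_pos_iff_support_of_nonneg hg_nonneg hg_int, h_support]

theorem stmt16_general {Ω : Type*} [MetricSpace Ω] [MeasurableSpace Ω] [BorelSpace Ω]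
    (κ : Ω → Measure Ω) [∀ x, IsFiniteMeasure (κ x)]
    (hirr : ∀ U : Set Ω, IsOpen U → U.Nonempty → U ≠ Set.univ →
      ∃ x, x ∉ U ∧ 0 < κ x U)
    (w : Ω → ℝ) (hlsc : LowerSemicontinuous w) (hnn : ∀ x, 0 ≤ w x)
    (hne : ∃ x, w x ≠ 0)
    (hineq : ∀ x, (∫ ξ, (1 - Real.exp (-(w ξ))) ∂ κ x) ≤ w x) :
    ∀ x, 0 < w x := by
  by_contra! ⟨z, hz⟩
  obtain ⟨x₀, hx₀⟩ := hne
  have hU_ne_univ : {x | 0 < w x} ≠ Set.univ :=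
    (Set.ne_univ_iff_exists_notMem _).mpr ⟨z, hz.not_gt⟩
  obtain ⟨x, hxU, hκ⟩ :=
    hirr _ (hlsc.isOpen_preimage 0) ⟨x₀, (hnn x₀).lt_of_ne' hx₀⟩ hU_ne_univ
  exact hxU ((integral_one_sub_exp_neg_pos hlsc.measurable hnn hκ).trans_le (hineq x))

/-- If κ is a topologically irreducible Feller kernel on a metric space Ω and
w̃ : Ω → ℝ₊ is a bounded lower semicontinuous nonzero function with
w̃(x) ≥ ∫ f(w̃(ξ)) κ(dξ,x) for all x (f(y) = 1 − e^{-y}), then w̃ is strictly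
positive on Ω. -/
theorem stmt16 {Ω : Type*} [MetricSpace Ω] [MeasurableSpace Ω] [BorelSpace Ω]
    (κ : Ω → Measure Ω) [∀ x, IsFiniteMeasure (κ x)]
    (hFeller : ∀ g : Ω → ℝ, Continuous g → (∃ C, ∀ x, |g x| ≤ C) →
      Continuous (fun x => ∫ ξ, g ξ ∂ κ x))
    (hirr : ∀ U : Set Ω, IsOpen U → U.Nonempty → U ≠ Set.univ →
      ∃ x, x ∉ U ∧ 0 < κ x U)
    (w : Ω → ℝ) (hlsc : LowerSemicontinuous w) (hnn : ∀ x, 0 ≤ w x)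
    (hb : ∃ C, ∀ x, w x ≤ C) (hne : ∃ x, w x ≠ 0)
    (hineq : ∀ x, (∫ ξ, (1 - Real.exp (-(w ξ))) ∂ κ x) ≤ w x) :
    ∀ x, 0 < w x :=
  stmt16_general κ hirr w hlsc hnn hne hineq
end

section
/- Let κ be a tight Feller kernel on a metric space Ω with inf_{x∈Ω} κ(Ω,x) > 0. Then κ is a comparability kernel. -/
/-!
On the compact set `W` given by tightness, a continuous positive `g` is bounded below by some
`m > 0`. Choosing `W` with `κ(Wᶜ, x) < c/2 ≤ κ(Ω, x)/2` forces `κ(W, x) ≥ κ(Ω, x)/2`, hence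
`∫ g dκ(·, x) ≥ m κ(W, x) ≥ (m/2) κ(Ω, x)` uniformly in `x`.
-/

open MeasureTheory Set
open scoped ENNReal

section

variable {ι Ω : Type*} [MeasurableSpace Ω]

def IsComparabilityFamily [TopologicalSpace Ω] (κ : ι → Measure Ω) : Prop :=
  ∀ g : Ω → ℝ, Continuous g → (∀ x, 0 < g x) →
    ∃ δ : ℝ, 0 < δ ∧ ∀ x, ENNReal.ofReal δ * κ x univ ≤ ∫⁻ ξ, ENNReal.ofReal (g ξ) ∂κ x

theorem ofReal_mul_measure_le_lintegral {μ : Measure Ω} {g : Ω → ℝ} (hg : Measurable g)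
    {W : Set Ω} {m : ℝ} (hm : ∀ ξ ∈ W, m ≤ g ξ) :
    ENNReal.ofReal m * μ W ≤ ∫⁻ ξ, ENNReal.ofReal (g ξ) ∂μ :=
  calc ENNReal.ofReal m * μ W = ∫⁻ _ in W, ENNReal.ofReal m ∂μ := (setLIntegral_const _ _).symm
    _ ≤ ∫⁻ ξ in W, ENNReal.ofReal (g ξ) ∂μ :=
        setLIntegral_mono hg.ennreal_ofReal fun ξ hξ => ENNReal.ofReal_le_ofReal (hm ξ hξ)
    _ ≤ ∫⁻ ξ, ENNReal.ofReal (g ξ) ∂μ := setLIntegral_le_lintegral _ _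

theorem half_measure_univ_le_of_measure_compl_le {μ : Measure Ω} {W : Set Ω}
    (hfin : μ Wᶜ ≠ ∞) (hW : μ Wᶜ ≤ μ univ / 2) : μ univ / 2 ≤ μ W := by
  refine ENNReal.le_of_add_le_add_right hfin ?_
  calc μ univ / 2 + μ Wᶜ ≤ μ univ / 2 + μ univ / 2 := by gcongr
    _ = μ univ := ENNReal.add_halves _
    _ = μ (W ∪ Wᶜ) := by rw [union_compl_self]
    _ ≤ μ W + μ Wᶜ := measure_union_le _ _

theorem isComparabilityFamily_of_isCompact [TopologicalSpace Ω] [OpensMeasurableSpace Ω]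
    {κ : ι → Measure Ω} {W : Set Ω} (hW : IsCompact W) {η : ℝ} (hη : 0 < η)
    (hκW : ∀ x, ENNReal.ofReal η * κ x univ ≤ κ x W) : IsComparabilityFamily κ := by
  intro g hg hgpos
  obtain ⟨m, hm, hmW⟩ := hW.exists_forall_le' hg.continuousOn fun ξ _ => hgpos ξ
  refine ⟨m * η, mul_pos hm hη, fun x => ?_⟩
  calc ENNReal.ofReal (m * η) * κ x univ = ENNReal.ofReal m * (ENNReal.ofReal η * κ x univ) := by
        rw [ENNReal.ofReal_mul hm.le, mul_assoc]
    _ ≤ ENNReal.ofReal m * κ x W := by gcongr; exact hκW x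
    _ ≤ ∫⁻ ξ, ENNReal.ofReal (g ξ) ∂κ x := ofReal_mul_measure_le_lintegral hg.measurable hmW

end

theorem stmt18_general {Ω : Type*} [MetricSpace Ω] [MeasurableSpace Ω] [BorelSpace Ω]
    (κ : Ω → Measure Ω)
    (htight : ∀ ε : ℝ, 0 < ε → ∃ W : Set Ω, IsCompact W ∧
      ∀ x, κ x Wᶜ < ENNReal.ofReal ε)
    (hinf : ∃ c : ℝ, 0 < c ∧ ∀ x, ENNReal.ofReal c ≤ κ x Set.univ) :
    ∀ g : Ω → ℝ, Continuous g → (∀ x, 0 < g x) →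
      ∃ δ : ℝ, 0 < δ ∧ ∀ x,
        ENNReal.ofReal δ * κ x Set.univ ≤ ∫⁻ ξ, ENNReal.ofReal (g ξ) ∂ κ x := by
  obtain ⟨c, hc, hcκ⟩ := hinf
  obtain ⟨W, hWc, hWκ⟩ := htight (c / 2) (half_pos hc)
  refine isComparabilityFamily_of_isCompact hWc one_half_pos fun x => ?_
  have hcompl : κ x Wᶜ ≤ κ x univ / 2 := by
    calc κ x Wᶜ ≤ ENNReal.ofReal (c / 2) := (hWκ x).le
      _ = ENNReal.ofReal c / 2 := by rw [ENNReal.ofReal_div_of_pos two_pos, ENNReal.ofReal_ofNat]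
      _ ≤ κ x univ / 2 := by gcongr; exact hcκ x
  rw [one_div, ENNReal.ofReal_inv_of_pos two_pos, ENNReal.ofReal_ofNat, mul_comm, ← div_eq_mul_inv]
  exact half_measure_univ_le_of_measure_compl_le (hWκ x).ne_top hcompl

/-- A tight Feller kernel κ with inf_x κ(Ω,x) > 0 is a comparability kernel:
for every continuous g : Ω → (0,∞) there is δ > 0 with
∫ g dκ(·,x) ≥ δ·κ(Ω,x) for all x. -/
theorem stmt18 {Ω : Type*} [MetricSpace Ω] [MeasurableSpace Ω] [BorelSpace Ω]
    (κ : Ω → Measure Ω) [∀ x, IsFiniteMeasure (κ x)]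
    (hbdd : ∃ B : ℝ≥0∞, B ≠ ⊤ ∧ ∀ x, κ x Set.univ ≤ B)
    (hFeller : ∀ g : Ω → ℝ, Continuous g → (∃ C, ∀ x, |g x| ≤ C) →
      Continuous (fun x => ∫ ξ, g ξ ∂ κ x))
    (htight : ∀ ε : ℝ, 0 < ε → ∃ W : Set Ω, IsCompact W ∧
      ∀ x, κ x Wᶜ < ENNReal.ofReal ε)
    (hinf : ∃ c : ℝ, 0 < c ∧ ∀ x, ENNReal.ofReal c ≤ κ x Set.univ) :
    ∀ g : Ω → ℝ, Continuous g → (∀ x, 0 < g x) →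
      ∃ δ : ℝ, 0 < δ ∧ ∀ x,
        ENNReal.ofReal δ * κ x Set.univ ≤ ∫⁻ ξ, ENNReal.ofReal (g ξ) ∂ κ x :=
  stmt18_general κ htight hinf
end
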